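/- arXiv:1709.09045 — 3 statements merged into one kernel-verified Lean document; each statement's English description precedes it below -/
import Mathlib

section
/- Let (X_1,…,X_n) be smooth vector fields on an open neighborhood U of 0 in ℝⁿ such that, for all i,j, [X_i,X_j] = Σ_{k : w_k ≤ w_i+w_j} L_{ij}^k X_k on U for some smooth functions L_{ij}^k, and suppose each X_j has weight −w_j; let X_j^{(0)} be the model vector field of X_j, i.e., the polynomial vector field with components (X_j^{(0)})_k(x) = Σ_{α : ⟨α⟩ = w_k − w_j} (1/α!) ∂^α (X_j)_k(0) x^α. Then for all i,j: [X_i^{(0)}, X_j^{(0)}] = Σ_{k : w_k = w_i+w_j} L_{ij}^k(0) X_k^{(0)} if w_i + w_j ≤ r, and [X_i^{(0)}, X_j^{(0)}] = 0 if w_i + w_j > r. -/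
open scoped BigOperators
open Filter Topology

namespace Carnot

/-- Anisotropic dilation `t · x = (t^{w_1} x_1, …, t^{w_n} x_n)`. -/
def dil {n : ℕ} (w : Fin n → ℕ) (t : ℝ) (x : Fin n → ℝ) : Fin n → ℝ :=
  fun i => t ^ (w i) * x i

/-- Weighted length `⟨α⟩` of a multi-index. -/
def wlen {n : ℕ} (w : Fin n → ℕ) (α : Fin n → ℕ) : ℕ := ∑ i, w i * α i

/-- Length `|α|` of a multi-index. -/
def mlen {n : ℕ} (α : Fin n → ℕ) : ℕ := ∑ i, α i

/-- A vector field acting on a function: `(Xf)(x) = Df(x)[X(x)]`. -/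
noncomputable def vf {n : ℕ} (X : (Fin n → ℝ) → (Fin n → ℝ)) (f : (Fin n → ℝ) → ℝ) :
    (Fin n → ℝ) → ℝ :=
  fun x => fderiv ℝ f x (X x)

/-- Iterated action `X_I f = X_{i_1}(X_{i_2}(⋯(X_{i_k} f)))`. -/
noncomputable def vfSeq {n : ℕ} (X : Fin n → (Fin n → ℝ) → (Fin n → ℝ)) :
    List (Fin n) → ((Fin n → ℝ) → ℝ) → ((Fin n → ℝ) → ℝ)
  | [], f => f
  | i :: I, f => vf (X i) (vfSeq X I f)

/-- Weight `⟨I⟩` of a finite sequence of indices. -/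
def seqW {n : ℕ} (w : Fin n → ℕ) (I : List (Fin n)) : ℕ := (I.map w).sum

/-- The list `(1,…,1,2,…,2,…,n,…,n)` with `i` repeated `α i` times. -/
def multiList {n : ℕ} (α : Fin n → ℕ) : List (Fin n) :=
  (List.finRange n).flatMap fun i => List.replicate (α i) i

/-- `X^α f = X_1^{α_1} ⋯ X_n^{α_n} f`. -/
noncomputable def vfPow {n : ℕ} (X : Fin n → (Fin n → ℝ) → (Fin n → ℝ)) (α : Fin n → ℕ)
    (f : (Fin n → ℝ) → ℝ) : (Fin n → ℝ) → ℝ :=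
  vfSeq X (multiList α) f

/-- Partial derivative `∂^α f`. -/
noncomputable def pdPow {n : ℕ} (α : Fin n → ℕ) (f : (Fin n → ℝ) → ℝ) : (Fin n → ℝ) → ℝ :=
  vfPow (fun i => fun _ => Pi.single i (1 : ℝ)) α f

/-- Lie bracket of two vector fields. -/
noncomputable def lieBk {n : ℕ} (X Y : (Fin n → ℝ) → (Fin n → ℝ)) : (Fin n → ℝ) → (Fin n → ℝ) :=
  fun x => fderiv ℝ Y x (X x) - fderiv ℝ X x (Y x)

/-- A weight sequence: non-decreasing, positive, starting at `1`. -/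
structure IsWeight {n : ℕ} (w : Fin n → ℕ) : Prop where
  mono : Monotone w
  pos : ∀ i, 0 < w i
  first : ∀ h : 0 < n, w ⟨0, h⟩ = 1

/-- An `H`-frame on `V`. -/
structure IsHFrame {n : ℕ} (w : Fin n → ℕ) (X : Fin n → (Fin n → ℝ) → (Fin n → ℝ))
    (V : Set (Fin n → ℝ)) : Prop where
  smooth : ∀ j, ContDiffOn ℝ (⊤ : ℕ∞) (X j) V
  basis : ∀ x ∈ V, LinearIndependent ℝ fun j => X j x
  bracket : ∃ L : Fin n → Fin n → Fin n → (Fin n → ℝ) → ℝ,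
    (∀ i j k, ContDiffOn ℝ (⊤ : ℕ∞) (L i j k) V) ∧
    (∀ i j k, ¬ w k ≤ w i + w j → ∀ x ∈ V, L i j k x = 0) ∧
    ∀ i j, ∀ x ∈ V, lieBk (X i) (X j) x = ∑ k, L i j k x • X k x

/-- `f` has order `≥ N` at `a` with respect to the frame `X`. -/
def OrderGe {n : ℕ} (w : Fin n → ℕ) (X : Fin n → (Fin n → ℝ) → (Fin n → ℝ))
    (f : (Fin n → ℝ) → ℝ) (a : Fin n → ℝ) (N : ℕ) : Prop :=
  ∀ I : List (Fin n), seqW w I < N → vfSeq X I f a = 0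

/-- `f` has order exactly `N` at `a` with respect to the frame `X`. -/
def OrderEq {n : ℕ} (w : Fin n → ℕ) (X : Fin n → (Fin n → ℝ) → (Fin n → ℝ))
    (f : (Fin n → ℝ) → ℝ) (a : Fin n → ℝ) (N : ℕ) : Prop :=
  OrderGe w X f a N ∧ ∃ I : List (Fin n), seqW w I = N ∧ vfSeq X I f a ≠ 0

/-- `f` has weight `≥ N`. -/
def WeightGe {n : ℕ} (w : Fin n → ℕ) (f : (Fin n → ℝ) → ℝ) (N : ℤ) : Prop :=
  ∀ α : Fin n → ℕ, (wlen w α : ℤ) < N → pdPow α f 0 = 0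

/-- `f` has weight exactly `N`. -/
def WeightEq {n : ℕ} (w : Fin n → ℕ) (f : (Fin n → ℝ) → ℝ) (N : ℤ) : Prop :=
  WeightGe w f N ∧ ∃ α : Fin n → ℕ, (wlen w α : ℤ) = N ∧ pdPow α f 0 ≠ 0

/-- A pseudo-norm for the anisotropic dilations. -/
structure IsPseudoNorm {n : ℕ} (w : Fin n → ℕ) (ρ : (Fin n → ℝ) → ℝ) : Prop where
  cont : Continuous ρ
  nonneg : ∀ x, 0 ≤ ρ x
  pos : ∀ x, x ≠ 0 → 0 < ρ x
  homog : ∀ t x, ρ (dil w t x) = |t| * ρ x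

/-- Multi-indices with all entries `< B`. -/
def mIdx (n B : ℕ) : Finset (Fin n → ℕ) := Fintype.piFinset fun _ => Finset.range B

/-- The monomial `x^α`. -/
def monom {n : ℕ} (α : Fin n → ℕ) (x : Fin n → ℝ) : ℝ := ∏ i, x i ^ α i

/-- Taylor coefficient `(1/α!) ∂^α f(0)`. -/
noncomputable def taylorCoeff {n : ℕ} (α : Fin n → ℕ) (f : (Fin n → ℝ) → ℝ) : ℝ :=
  ((∏ i, Nat.factorial (α i) : ℕ) : ℝ)⁻¹ * pdPow α f 0

/-- The homogeneous part `f^[ℓ]` of degree `ℓ` of the Taylor series of `f` at `0`. -/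
noncomputable def homPart {n : ℕ} (w : Fin n → ℕ) (f : (Fin n → ℝ) → ℝ) (ℓ : ℕ) :
    (Fin n → ℝ) → ℝ :=
  fun x => ∑ α ∈ (mIdx n (ℓ + 1)).filter (fun α => wlen w α = ℓ),
    taylorCoeff α f * monom α x

/-- `u_t = O(t^m)` in `C^∞(U)` as `t → 0`. -/
def BigOC {n : ℕ} (U : Set (Fin n → ℝ)) (u : ℝ → (Fin n → ℝ) → ℝ) (m : ℤ) : Prop :=
  ∀ K : Set (Fin n → ℝ), K ⊆ U → IsCompact K → ∀ β : Fin n → ℕ,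
    ∃ C : ℝ, ∀ᶠ t in 𝓝[≠] (0 : ℝ), ∀ x ∈ K, |pdPow β (u t) x| ≤ C * |t| ^ m

/-- Componentwise `O(t^m)` in `C^∞(U)` for families of vector fields. -/
def BigOCVF {n : ℕ} (U : Set (Fin n → ℝ)) (u : ℝ → (Fin n → ℝ) → Fin n → ℝ)
    (m : ℤ) : Prop :=
  ∀ K : Set (Fin n → ℝ), K ⊆ U → IsCompact K → ∀ β : Fin n → ℕ, ∀ k : Fin n,
    ∃ C : ℝ, ∀ᶠ t in 𝓝[≠] (0 : ℝ), ∀ x ∈ K,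
      |pdPow β (fun y => u t y k) x| ≤ C * |t| ^ m

/-- `Θ = O_w(‖x‖^{w+m})` near `x = 0`. -/
def IsOw {n : ℕ} (w : Fin n → ℕ) (ρ : (Fin n → ℝ) → ℝ)
    (Θ : (Fin n → ℝ) → (Fin n → ℝ)) (m : ℤ) : Prop :=
  ∀ k, ∃ C : ℝ, ∀ᶠ x in 𝓝 (0 : Fin n → ℝ), |Θ x k| ≤ C * ρ x ^ ((w k : ℤ) + m)

/-- A `w`-homogeneous map. -/
def WHomog {n : ℕ} (w : Fin n → ℕ) (φ : (Fin n → ℝ) → (Fin n → ℝ)) : Prop :=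
  ∀ t x, φ (dil w t x) = dil w t (φ x)

/-- A map whose components are polynomial functions. -/
def IsPolyMap {n : ℕ} (φ : (Fin n → ℝ) → (Fin n → ℝ)) : Prop :=
  ∀ k, ∃ p : MvPolynomial (Fin n) ℝ, ∀ x, φ x k = MvPolynomial.eval x p

/-- A vector field homogeneous of degree `m`: `δ_t^* Y = t^m Y` for `t ≠ 0`. -/
def VFHomog {n : ℕ} (w : Fin n → ℕ) (Y : (Fin n → ℝ) → (Fin n → ℝ)) (m : ℤ) : Prop :=
  ∀ t : ℝ, t ≠ 0 → ∀ x k, (t : ℝ) ^ (-(w k : ℤ)) * Y (dil w t x) k = t ^ m * Y x k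

/-- A vector field has weight `W`: each component `X_k` has weight `≥ W + w_k`,
with equality for some `k`. -/
def VFWeightEq {n : ℕ} (w : Fin n → ℕ) (X : (Fin n → ℝ) → (Fin n → ℝ)) (W : ℤ) :
    Prop :=
  (∀ k, ∀ α : Fin n → ℕ, (wlen w α : ℤ) < W + w k →
    pdPow α (fun y => X y k) 0 = 0) ∧
  ∃ k, ∃ α : Fin n → ℕ, (wlen w α : ℤ) = W + w k ∧ pdPow α (fun y => X y k) 0 ≠ 0

/-- The homogeneous part `X^[ℓ]` of degree `ℓ` of a vector field. -/
noncomputable def vfPart {n : ℕ} (w : Fin n → ℕ) (X : (Fin n → ℝ) → (Fin n → ℝ)) (ℓ : ℤ) :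
    (Fin n → ℝ) → Fin n → ℝ :=
  fun x k => ∑ α ∈ (mIdx n ((ℓ + w k).toNat + 1)).filter
      (fun α => (wlen w α : ℤ) = ℓ + w k),
    taylorCoeff α (fun y => X y k) * monom α x

/-- `φ` produces privileged coordinates at `a` adapted to the `H`-frame `X`:
it is linearly adapted at `a` and each component has order `w_k` at `a`. -/
def PrivilegedAt {n : ℕ} (w : Fin n → ℕ) (X : Fin n → (Fin n → ℝ) → (Fin n → ℝ))
    (a : Fin n → ℝ) (φ : (Fin n → ℝ) → (Fin n → ℝ)) : Prop :=
  (∀ j, fderiv ℝ φ a (X j a) = Pi.single j 1) ∧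
  ∀ k, OrderEq w X (fun x => φ x k) a (w k)


open scoped ContDiff

section Aux

variable {n : ℕ}

/-- Single coordinate derivative. -/
noncomputable def pdd (m : Fin n) (f : (Fin n → ℝ) → ℝ) : (Fin n → ℝ) → ℝ :=
  fun x => fderiv ℝ f x (Pi.single m 1)

/-- Iterated coordinate derivatives along a list. -/
noncomputable def pdL (I : List (Fin n)) (f : (Fin n → ℝ) → ℝ) : (Fin n → ℝ) → ℝ :=
  vfSeq (fun i _ => Pi.single i (1 : ℝ)) I f

lemma pdL_nil (f : (Fin n → ℝ) → ℝ) : pdL ([] : List (Fin n)) f = f := rfl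

lemma pdL_cons (m : Fin n) (I : List (Fin n)) (f : (Fin n → ℝ) → ℝ) :
    pdL (m :: I) f = pdd m (pdL I f) := rfl

lemma pdPow_eq_pdL (γ : Fin n → ℕ) (f : (Fin n → ℝ) → ℝ) :
    pdPow γ f = pdL (multiList γ) f := rfl

lemma pdL_append (I J : List (Fin n)) (f : (Fin n → ℝ) → ℝ) :
    pdL (I ++ J) f = pdL I (pdL J f) := by
  induction I with
  | nil => rfl
  | cons a I ih => simp [pdL_cons, ih, List.cons_append]

lemma pdL_singleton (m : Fin n) (f : (Fin n → ℝ) → ℝ) : pdL [m] f = pdd m f := rfl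

variable {U : Set (Fin n → ℝ)}

lemma diffAt (hU : IsOpen U) {f : (Fin n → ℝ) → ℝ} (hf : ContDiffOn ℝ ∞ f U)
    {x : Fin n → ℝ} (hx : x ∈ U) : DifferentiableAt ℝ f x :=
  (hf.contDiffAt (hU.mem_nhds hx)).differentiableAt (by norm_cast)

lemma pdd_smooth (hU : IsOpen U) {f : (Fin n → ℝ) → ℝ} (hf : ContDiffOn ℝ ∞ f U) (m : Fin n) :
    ContDiffOn ℝ ∞ (pdd m f) U := by
  have h1 : ContDiffOn ℝ ∞ (fderiv ℝ f) U := hf.fderiv_of_isOpen hU (by norm_num)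
  exact h1.clm_apply contDiffOn_const

lemma pdL_smooth (hU : IsOpen U) {f : (Fin n → ℝ) → ℝ} (hf : ContDiffOn ℝ ∞ f U)
    (I : List (Fin n)) : ContDiffOn ℝ ∞ (pdL I f) U := by
  induction I with
  | nil => exact hf
  | cons a I ih => exact pdd_smooth hU ih a

lemma pdd_congr (hU : IsOpen U) {f g : (Fin n → ℝ) → ℝ} (h : ∀ y ∈ U, f y = g y) (m : Fin n) :
    ∀ x ∈ U, pdd m f x = pdd m g x := by
  intro x hx
  have hev : f =ᶠ[nhds x] g := Filter.eventuallyEq_of_mem (hU.mem_nhds hx) h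
  simp only [pdd, hev.fderiv_eq]

lemma pdL_congr (hU : IsOpen U) {f g : (Fin n → ℝ) → ℝ} (h : ∀ y ∈ U, f y = g y)
    (I : List (Fin n)) : ∀ x ∈ U, pdL I f x = pdL I g x := by
  induction I with
  | nil => exact h
  | cons a I ih => exact pdd_congr hU ih a

lemma pdd_const (m : Fin n) (c : ℝ) (x : Fin n → ℝ) : pdd m (fun _ => c) x = 0 := by
  simp [pdd]

lemma pdd_add {f g : (Fin n → ℝ) → ℝ} {x : Fin n → ℝ} (hf : DifferentiableAt ℝ f x)
    (hg : DifferentiableAt ℝ g x) (m : Fin n) :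
    pdd m (fun y => f y + g y) x = pdd m f x + pdd m g x := by
  simp [pdd, fderiv_fun_add hf hg]

lemma pdd_sub {f g : (Fin n → ℝ) → ℝ} {x : Fin n → ℝ} (hf : DifferentiableAt ℝ f x)
    (hg : DifferentiableAt ℝ g x) (m : Fin n) :
    pdd m (fun y => f y - g y) x = pdd m f x - pdd m g x := by
  simp [pdd, fderiv_fun_sub hf hg]

lemma pdd_const_mul {f : (Fin n → ℝ) → ℝ} {x : Fin n → ℝ} (hf : DifferentiableAt ℝ f x)
    (c : ℝ) (m : Fin n) : pdd m (fun y => c * f y) x = c * pdd m f x := by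
  simp [pdd, fderiv_const_mul hf c]

lemma pdd_mul {f g : (Fin n → ℝ) → ℝ} {x : Fin n → ℝ} (hf : DifferentiableAt ℝ f x)
    (hg : DifferentiableAt ℝ g x) (m : Fin n) :
    pdd m (fun y => f y * g y) x = pdd m f x * g x + f x * pdd m g x := by
  simp only [pdd, fderiv_fun_mul hf hg]
  simp [mul_comm]
  ring

lemma contDiffOn_list_sum {β : Type} (l : List β) (F : β → (Fin n → ℝ) → ℝ)
    (hF : ∀ b ∈ l, ContDiffOn ℝ ∞ (F b) U) :
    ContDiffOn ℝ ∞ (fun y => (l.map fun b => F b y).sum) U := by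
  induction l with
  | nil => simpa using contDiffOn_const
  | cons a l ih =>
    simp only [List.map_cons, List.sum_cons]
    exact (hF a (by simp)).add (ih fun b hb => hF b (by simp [hb]))

lemma pdd_list_sum (hU : IsOpen U) {β : Type} (l : List β) (F : β → (Fin n → ℝ) → ℝ)
    (hF : ∀ b ∈ l, ContDiffOn ℝ ∞ (F b) U) (m : Fin n) :
    ∀ x ∈ U, pdd m (fun y => (l.map fun b => F b y).sum) x = (l.map fun b => pdd m (F b) x).sum := by
  induction l with
  | nil => intro x hx; simp [pdd]
  | cons a l ih =>
    intro x hx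
    have h1 : ∀ y ∈ U, (List.map (fun b => F b y) (a :: l)).sum
        = F a y + (l.map fun b => F b y).sum := by intro y _; simp
    rw [pdd_congr hU h1 m x hx,
      pdd_add (diffAt hU (hF a (by simp)) hx)
        (diffAt hU (contDiffOn_list_sum l F fun b hb => hF b (by simp [hb])) hx) m,
      ih (fun b hb => hF b (by simp [hb])) x hx]
    simp

lemma pdL_add (hU : IsOpen U) {f g : (Fin n → ℝ) → ℝ} (hf : ContDiffOn ℝ ∞ f U)
    (hg : ContDiffOn ℝ ∞ g U) (I : List (Fin n)) :
    ∀ x ∈ U, pdL I (fun y => f y + g y) x = pdL I f x + pdL I g x := by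
  induction I with
  | nil => intro x hx; rfl
  | cons a I ih =>
    intro x hx
    rw [pdL_cons, pdd_congr hU ih a x hx,
      pdd_add (diffAt hU (pdL_smooth hU hf I) hx) (diffAt hU (pdL_smooth hU hg I) hx) a]
    rfl

lemma pdL_sub (hU : IsOpen U) {f g : (Fin n → ℝ) → ℝ} (hf : ContDiffOn ℝ ∞ f U)
    (hg : ContDiffOn ℝ ∞ g U) (I : List (Fin n)) :
    ∀ x ∈ U, pdL I (fun y => f y - g y) x = pdL I f x - pdL I g x := by
  induction I with
  | nil => intro x hx; rfl
  | cons a I ih =>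
    intro x hx
    rw [pdL_cons, pdd_congr hU ih a x hx,
      pdd_sub (diffAt hU (pdL_smooth hU hf I) hx) (diffAt hU (pdL_smooth hU hg I) hx) a]
    rfl

lemma pdL_const_mul (hU : IsOpen U) {f : (Fin n → ℝ) → ℝ} (hf : ContDiffOn ℝ ∞ f U)
    (c : ℝ) (I : List (Fin n)) :
    ∀ x ∈ U, pdL I (fun y => c * f y) x = c * pdL I f x := by
  induction I with
  | nil => intro x hx; rfl
  | cons a I ih =>
    intro x hx
    rw [pdL_cons, pdd_congr hU ih a x hx,
      pdd_const_mul (diffAt hU (pdL_smooth hU hf I) hx) c a]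
    rfl

lemma pdL_zero (I : List (Fin n)) : ∀ x, pdL I (fun _ => (0 : ℝ)) x = 0 := by
  induction I with
  | nil => intro x; rfl
  | cons a I ih =>
    intro x
    rw [pdL_cons, pdd_congr isOpen_univ (fun y _ => ih y) a x trivial]
    exact pdd_const a 0 x

lemma pdL_list_sum (hU : IsOpen U) {β : Type} (l : List β) (F : β → (Fin n → ℝ) → ℝ)
    (hF : ∀ b ∈ l, ContDiffOn ℝ ∞ (F b) U) (I : List (Fin n)) :
    ∀ x ∈ U, pdL I (fun y => (l.map fun b => F b y).sum) x = (l.map fun b => pdL I (F b) x).sum := by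
  induction I with
  | nil => intro x hx; simp [pdL_nil]
  | cons a I ih =>
    intro x hx
    rw [pdL_cons, pdd_congr hU ih a x hx,
      pdd_list_sum hU l _ (fun b hb => pdL_smooth hU (hF b hb) I) a x hx]
    simp [pdL_cons]

lemma pdL_finset_sum (hU : IsOpen U) {β : Type} (s : Finset β) (F : β → (Fin n → ℝ) → ℝ)
    (hF : ∀ b ∈ s, ContDiffOn ℝ ∞ (F b) U) (I : List (Fin n)) :
    ∀ x ∈ U, pdL I (fun y => ∑ b ∈ s, F b y) x = ∑ b ∈ s, pdL I (F b) x := by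
  classical
  induction s using Finset.induction_on with
  | empty =>
    intro x hx
    have h1 : ∀ y ∈ U, (∑ b ∈ (∅ : Finset β), F b y) = 0 := by simp
    rw [pdL_congr hU h1 I x hx]
    simpa using pdL_zero I x
  | @insert b s hb ih =>
    intro x hx
    have h1 : ∀ y ∈ U, (∑ c ∈ insert b s, F c y) = F b y + ∑ c ∈ s, F c y := by
      intro y _; exact Finset.sum_insert hb
    rw [pdL_congr hU h1 I x hx,
      pdL_add hU (hF b (Finset.mem_insert_self b s))
        (ContDiffOn.sum fun c hc => hF c (Finset.mem_insert_of_mem hc)) I x hx,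
      ih (fun c hc => hF c (Finset.mem_insert_of_mem hc)) x hx, Finset.sum_insert hb]

end Aux
section Aux2

variable {n : ℕ}

/-- All ways to distribute a list of derivatives over two factors. -/
def splits : List (Fin n) → List (List (Fin n) × List (Fin n))
  | [] => [([], [])]
  | a :: l => (splits l).flatMap fun p => [(a :: p.1, p.2), (p.1, a :: p.2)]

lemma list_sum_map_flatMap {β χ : Type} (l : List β) (g : β → List χ) (f : χ → ℝ) :
    ((l.flatMap g).map f).sum = (l.map fun b => ((g b).map f).sum).sum := by
  induction l with
  | nil => rfl
  | cons a l ih => simp [List.flatMap_cons, ih]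

lemma sum_splits_cons (a : Fin n) (I : List (Fin n)) (f : List (Fin n) × List (Fin n) → ℝ) :
    ((splits (a :: I)).map f).sum
      = ((splits I).map fun p => f (a :: p.1, p.2) + f (p.1, a :: p.2)).sum := by
  show (((splits I).flatMap fun p => [(a :: p.1, p.2), (p.1, a :: p.2)]).map f).sum = _
  rw [list_sum_map_flatMap]
  simp

lemma mem_splits_left {I : List (Fin n)} {q : List (Fin n) × List (Fin n)}
    (hq : q ∈ splits I) (a : Fin n) : (a :: q.1, q.2) ∈ splits (a :: I) := by
  show _ ∈ (splits I).flatMap fun p => [(a :: p.1, p.2), (p.1, a :: p.2)]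
  rw [List.mem_flatMap]
  exact ⟨q, hq, by simp⟩

lemma mem_splits_right {I : List (Fin n)} {q : List (Fin n) × List (Fin n)}
    (hq : q ∈ splits I) (a : Fin n) : (q.1, a :: q.2) ∈ splits (a :: I) := by
  show _ ∈ (splits I).flatMap fun p => [(a :: p.1, p.2), (p.1, a :: p.2)]
  rw [List.mem_flatMap]
  exact ⟨q, hq, by simp⟩

lemma mem_splits_count {I : List (Fin n)} {p : List (Fin n) × List (Fin n)}
    (hp : p ∈ splits I) (a : Fin n) : p.1.count a + p.2.count a = I.count a := by
  induction I generalizing p with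
  | nil =>
    simp only [splits, List.mem_singleton] at hp
    subst hp; simp
  | cons b I ih =>
    have hp' : p ∈ (splits I).flatMap fun q => [(b :: q.1, q.2), (q.1, b :: q.2)] := hp
    rw [List.mem_flatMap] at hp'
    obtain ⟨q, hq, hcase⟩ := hp'
    simp only [List.mem_cons, List.mem_singleton, List.not_mem_nil, or_false] at hcase
    have hcc := ih hq
    rcases hcase with h | h <;> subst h <;> simp [List.count_cons] <;> omega

lemma sum_splits_of_nil {I : List (Fin n)} (f : List (Fin n) × List (Fin n) → ℝ)
    (h : ∀ p ∈ splits I, p.1 ≠ [] → f p = 0) :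
    ((splits I).map f).sum = f ([], I) := by
  induction I generalizing f with
  | nil => simp [splits]
  | cons a I ih =>
    rw [sum_splits_cons]
    have h1 : ∀ p ∈ splits I,
        (fun p => f (a :: p.1, p.2) + f (p.1, a :: p.2)) p = (fun p => f (p.1, a :: p.2)) p := by
      intro p hp
      have : f (a :: p.1, p.2) = 0 := h _ (mem_splits_left hp a) (by simp)
      simp [this]
    rw [List.map_congr_left h1]
    exact ih (fun p => f (p.1, a :: p.2)) fun p hp hne => h _ (mem_splits_right hp a) hne

variable {U : Set (Fin n → ℝ)}

lemma pdL_mul (hU : IsOpen U) {f g : (Fin n → ℝ) → ℝ} (hf : ContDiffOn ℝ ∞ f U)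
    (hg : ContDiffOn ℝ ∞ g U) (I : List (Fin n)) : ∀ x ∈ U,
    pdL I (fun y => f y * g y) x = ((splits I).map fun p => pdL p.1 f x * pdL p.2 g x).sum := by
  induction I with
  | nil => intro x hx; simp [splits, pdL_nil]
  | cons a I ih =>
    intro x hx
    rw [pdL_cons, pdd_congr hU ih a x hx,
      pdd_list_sum hU (splits I) (fun p => fun y => pdL p.1 f y * pdL p.2 g y)
        (fun p _ => (pdL_smooth hU hf p.1).mul (pdL_smooth hU hg p.2)) a x hx]
    have h2 : ∀ p ∈ splits I,
        (fun p => pdd a (fun y => pdL p.1 f y * pdL p.2 g y) x) p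
          = (fun p => pdL (a :: p.1) f x * pdL p.2 g x + pdL p.1 f x * pdL (a :: p.2) g x) p := by
      intro p _
      simp only
      rw [pdd_mul (diffAt hU (pdL_smooth hU hf p.1) hx) (diffAt hU (pdL_smooth hU hg p.2) hx) a]
      rfl
    rw [List.map_congr_left h2, sum_splits_cons]

lemma pdd_comm (hU : IsOpen U) {f : (Fin n → ℝ) → ℝ} (hf : ContDiffOn ℝ ∞ f U) (a b : Fin n) :
    ∀ x ∈ U, pdd a (pdd b f) x = pdd b (pdd a f) x := by
  intro x hx
  have hsym : IsSymmSndFDerivAt ℝ f x :=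
    (hf.contDiffAt (hU.mem_nhds hx)).isSymmSndFDerivAt (by rw [minSmoothness_of_isRCLikeNormedField]; norm_cast)
  have hdf : DifferentiableAt ℝ (fderiv ℝ f) x :=
    (((hf.fderiv_of_isOpen hU (m := ∞) (by norm_num)).contDiffAt
      (hU.mem_nhds hx)).differentiableAt (by norm_cast))
  have key : ∀ v u : Fin n → ℝ,
      fderiv ℝ (fun y => fderiv ℝ f y u) x v = fderiv ℝ (fderiv ℝ f) x v u := by
    intro v u
    rw [fderiv_clm_apply hdf (differentiableAt_const u)]
    simp
  show fderiv ℝ (fun y => fderiv ℝ f y (Pi.single b 1)) x (Pi.single a 1)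
      = fderiv ℝ (fun y => fderiv ℝ f y (Pi.single a 1)) x (Pi.single b 1)
  rw [key, key, hsym]

lemma pdL_perm (hU : IsOpen U) {f : (Fin n → ℝ) → ℝ} (hf : ContDiffOn ℝ ∞ f U)
    {I J : List (Fin n)} (hIJ : I.Perm J) : ∀ x ∈ U, pdL I f x = pdL J f x := by
  induction hIJ with
  | nil => intro x _; rfl
  | cons a h ih => exact pdd_congr hU ih a
  | swap a b l => exact pdd_comm hU (pdL_smooth hU hf l) b a
  | trans h1 h2 ih1 ih2 => intro x hx; rw [ih1 x hx, ih2 x hx]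

lemma count_flatMap_replicate (γ : Fin n → ℕ) (i : Fin n) :
    ∀ l : List (Fin n), l.Nodup →
      ((l.flatMap fun j => List.replicate (γ j) j).count i = if i ∈ l then γ i else 0) := by
  intro l
  induction l with
  | nil => intro _; simp
  | cons b l ih =>
    intro hnd
    rw [List.nodup_cons] at hnd
    rw [List.flatMap_cons, List.count_append, ih hnd.2]
    by_cases hib : i = b
    · subst hib
      simp [List.count_replicate, hnd.1]
    · have hbi : ¬ b = i := fun h => hib h.symm
      simp [List.count_replicate, hib, hbi, List.mem_cons]

lemma count_multiList (γ : Fin n → ℕ) (i : Fin n) : (multiList γ).count i = γ i := by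
  show ((List.finRange n).flatMap fun j => List.replicate (γ j) j).count i = γ i
  rw [count_flatMap_replicate γ i (List.finRange n) (List.nodup_finRange n)]
  simp [List.mem_finRange]

lemma perm_multiList (I : List (Fin n)) : I.Perm (multiList fun i => I.count i) :=
  List.perm_iff_count.2 fun a => by rw [count_multiList]

lemma pdL_eq_pdPow (hU : IsOpen U) {f : (Fin n → ℝ) → ℝ} (hf : ContDiffOn ℝ ∞ f U)
    (I : List (Fin n)) : ∀ x ∈ U, pdL I f x = pdPow (fun i => I.count i) f x := by
  intro x hx
  rw [pdPow_eq_pdL]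
  exact pdL_perm hU hf (perm_multiList I) x hx

lemma seqW_cons (w : Fin n → ℕ) (a : Fin n) (I : List (Fin n)) :
    seqW w (a :: I) = w a + seqW w I := by simp [seqW]

lemma seqW_append (w : Fin n → ℕ) (I J : List (Fin n)) :
    seqW w (I ++ J) = seqW w I + seqW w J := by simp [seqW]

lemma wlen_count (w : Fin n → ℕ) (I : List (Fin n)) :
    wlen w (fun i => I.count i) = seqW w I := by
  induction I with
  | nil => simp [wlen, seqW]
  | cons a I ih =>
    rw [seqW_cons, ← ih]
    show (∑ i, w i * (a :: I).count i) = w a + ∑ i, w i * I.count i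
    have h1 : ∀ i : Fin n, w i * (a :: I).count i
        = w i * I.count i + (if i = a then w i else 0) := by
      intro i
      rw [List.count_cons]
      by_cases hia : i = a
      · subst hia; simp [Nat.mul_add]
      · simp [hia]
        exact Or.inl fun h => hia h.symm
    rw [Finset.sum_congr rfl fun i _ => h1 i, Finset.sum_add_distrib]
    simp [Finset.sum_ite_eq' Finset.univ a fun i => w i]
    ring

lemma seqW_pos (w : Fin n → ℕ) (hw : ∀ i, 0 < w i) {I : List (Fin n)} (hI : I ≠ []) :
    0 < seqW w I := by
  cases I with
  | nil => exact absurd rfl hI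
  | cons a I => rw [seqW_cons]; exact Nat.lt_of_lt_of_le (hw a) (Nat.le_add_right _ _)

end Aux2
section Aux3

variable {n : ℕ}

def dec (α : Fin n → ℕ) (m : Fin n) : Fin n → ℕ := Function.update α m (α m - 1)

def tsub (α β : Fin n → ℕ) : Fin n → ℕ := fun i => α i - β i

def cC : List (Fin n) → (Fin n → ℕ) → ℕ
  | [], _ => 1
  | m :: I, α => cC I α * tsub α (fun i => I.count i) m

lemma contDiff_prod_pow (α : Fin n → ℕ) (s : Finset (Fin n)) :
    ContDiff ℝ ∞ (fun x : Fin n → ℝ => ∏ i ∈ s, x i ^ α i) := by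
  classical
  induction s using Finset.induction_on with
  | empty => simpa using contDiff_const
  | @insert b s hb ih =>
    have h1 : ContDiff ℝ ∞ (fun x : Fin n → ℝ => x b ^ α b) :=
      ((ContinuousLinearMap.proj b : (Fin n → ℝ) →L[ℝ] ℝ).contDiff).pow (α b)
    have := h1.mul ih
    simpa [Finset.prod_insert hb] using this

lemma contDiff_monom (α : Fin n → ℕ) : ContDiff ℝ ∞ (monom α) :=
  contDiff_prod_pow α Finset.univ

lemma hasFDerivAt_monom (α : Fin n → ℕ) (x : Fin n → ℝ) :
    HasFDerivAt (monom α)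
      (∑ i, (∏ j ∈ Finset.univ.erase i, x j ^ α j) •
        (((α i : ℝ) * x i ^ (α i - 1)) • (ContinuousLinearMap.proj i : (Fin n → ℝ) →L[ℝ] ℝ))) x := by
  have h : ∀ i ∈ Finset.univ, HasFDerivAt (fun x : Fin n → ℝ => x i ^ α i)
      (((α i : ℝ) * x i ^ (α i - 1)) • (ContinuousLinearMap.proj i : (Fin n → ℝ) →L[ℝ] ℝ)) x := by
    intro i _
    exact (hasDerivAt_pow (α i) (x i)).comp_hasFDerivAt x (hasFDerivAt_apply i x)
  exact HasFDerivAt.finset_prod h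

lemma pdd_monom (α : Fin n → ℕ) (m : Fin n) (x : Fin n → ℝ) :
    pdd m (monom α) x = (α m : ℝ) * monom (dec α m) x := by
  have h2 : monom (dec α m) x = x m ^ (α m - 1) * ∏ j ∈ Finset.univ.erase m, x j ^ α j := by
    rw [show monom (dec α m) x = ∏ j, x j ^ dec α m j from rfl,
      ← Finset.mul_prod_erase Finset.univ _ (Finset.mem_univ m)]
    congr 1
    · simp [dec]
    · exact Finset.prod_congr rfl fun j hj => by
        simp [dec, Function.update_of_ne (Finset.ne_of_mem_erase hj)]
  rw [show pdd m (monom α) x = fderiv ℝ (monom α) x (Pi.single m 1) from rfl,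
    (hasFDerivAt_monom α x).fderiv]
  simp only [ContinuousLinearMap.sum_apply, ContinuousLinearMap.smul_apply,
    ContinuousLinearMap.proj_apply, Pi.single_apply, smul_eq_mul]
  rw [Finset.sum_eq_single_of_mem m (Finset.mem_univ m)
    (fun b _ hb => by simp [hb])]
  rw [h2]
  simp only [if_true]
  ring

lemma monom_zero_eval (β : Fin n → ℕ) : monom β (0 : Fin n → ℝ) = if β = 0 then 1 else 0 := by
  by_cases hβ : β = 0
  · subst hβ; simp [monom]
  · rw [if_neg hβ, monom]
    obtain ⟨i, hi⟩ : ∃ i, β i ≠ 0 := by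
      by_contra h; push_neg at h; exact hβ (funext h)
    exact Finset.prod_eq_zero (Finset.mem_univ i) (by simp [zero_pow hi])

lemma pdL_monom (I : List (Fin n)) (α : Fin n → ℕ) :
    pdL I (monom α) = fun x => (cC I α : ℝ) * monom (tsub α fun i => I.count i) x := by
  induction I with
  | nil =>
    funext x
    simp [pdL_nil, cC, tsub, monom]
  | cons m I ih =>
    funext x
    rw [pdL_cons, ih]
    rw [pdd_const_mul (((contDiff_monom _).differentiable (by norm_cast)).differentiableAt) _ m,
      pdd_monom]
    have hβ : dec (tsub α fun i => I.count i) m = tsub α fun i => (m :: I).count i := by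
      funext i
      by_cases him : i = m
      · subst him; simp [dec, tsub, List.count_cons]; omega
      · simp [dec, tsub, Function.update_of_ne him, List.count_cons, him, Ne.symm him]
    rw [hβ]
    show (cC I α : ℝ) * ((((tsub α fun i => I.count i) m : ℕ) : ℝ) * _)
        = ((cC I α * tsub α (fun i => I.count i) m : ℕ) : ℝ) * _
    push_cast
    ring

lemma cC_append (I J : List (Fin n)) (α : Fin n → ℕ) :
    cC (I ++ J) α = cC J α * cC I (tsub α fun i => J.count i) := by
  induction I with
  | nil => simp [cC]
  | cons m I ih =>
    show cC (I ++ J) α * tsub α (fun i => (I ++ J).count i) m = _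
    rw [ih]
    show _ = cC J α * (cC I (tsub α fun i => J.count i)
      * tsub (tsub α fun i => J.count i) (fun i => I.count i) m)
    have heq : tsub α (fun i => (I ++ J).count i) m
        = tsub (tsub α fun i => J.count i) (fun i => I.count i) m := by
      simp [tsub, List.count_append]
      omega
    rw [heq]; ring

lemma cC_replicate (k : ℕ) (m : Fin n) (α : Fin n → ℕ) :
    cC (List.replicate k m) α = Nat.descFactorial (α m) k := by
  induction k with
  | zero => rfl
  | succ k ih =>
    show cC (List.replicate k m) α * tsub α (fun i => (List.replicate k m).count i) m = _
    rw [ih, Nat.descFactorial_succ]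
    simp [tsub, List.count_replicate]
    ring

lemma cC_flatMap (γ α : Fin n → ℕ) :
    ∀ l : List (Fin n), l.Nodup →
      cC (l.flatMap fun j => List.replicate (γ j) j) α
        = (l.map fun i => Nat.descFactorial (α i) (γ i)).prod := by
  intro l
  induction l with
  | nil => intro _; rfl
  | cons b l ih =>
    intro hnd
    rw [List.nodup_cons] at hnd
    rw [List.flatMap_cons, cC_append, ih hnd.2, cC_replicate, List.map_cons, List.prod_cons]
    have hcnt : (l.flatMap fun j => List.replicate (γ j) j).count b = 0 := by
      rw [count_flatMap_replicate γ b l hnd.2]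
      simp [hnd.1]
    have : tsub α (fun i => (l.flatMap fun j => List.replicate (γ j) j).count i) b = α b := by
      simp [tsub, hcnt]
    rw [this]
    ring

lemma cC_multiList (γ α : Fin n → ℕ) :
    cC (multiList γ) α = ∏ i, Nat.descFactorial (α i) (γ i) := by
  rw [show multiList γ = (List.finRange n).flatMap fun j => List.replicate (γ j) j from rfl,
    cC_flatMap γ α (List.finRange n) (List.nodup_finRange n), ← Fin.prod_univ_def]

lemma pdPow_monom_zero (γ α : Fin n → ℕ) :
    pdPow γ (monom α) 0 = if γ = α then ((∏ i, Nat.factorial (γ i) : ℕ) : ℝ) else 0 := by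
  classical
  have hcnt : (fun i => (multiList γ).count i) = γ := funext fun i => count_multiList γ i
  have h0 : pdPow γ (monom α) 0 = (cC (multiList γ) α : ℝ) * monom (tsub α γ) 0 := by
    rw [pdPow_eq_pdL, pdL_monom, hcnt]
  rw [h0, monom_zero_eval, cC_multiList]
  by_cases hγα : γ = α
  · subst hγα
    have hz : tsub γ γ = 0 := funext fun i => Nat.sub_self (γ i)
    simp [hz, Nat.descFactorial_self]
  · rw [if_neg hγα]
    by_cases hts : tsub α γ = 0
    · rw [if_pos hts]
      obtain ⟨i, hi⟩ : ∃ i, γ i ≠ α i := by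
        by_contra h; push_neg at h; exact hγα (funext h)
      have hlt : α i < γ i := by
        have h1 : α i - γ i = 0 := congrFun hts i
        omega
      have hdz : (∏ i, Nat.descFactorial (α i) (γ i)) = 0 :=
        Finset.prod_eq_zero (Finset.mem_univ i) (Nat.descFactorial_eq_zero_iff_lt.2 hlt)
      simp [hdz]
    · simp [if_neg hts]

lemma pdPow_polysum (S : Finset (Fin n → ℕ)) (c : (Fin n → ℕ) → ℝ) (β : Fin n → ℕ) :
    pdPow β (fun x => ∑ α ∈ S, c α * monom α x) 0
      = if β ∈ S then c β * ((∏ i, Nat.factorial (β i) : ℕ) : ℝ) else 0 := by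
  classical
  rw [pdPow_eq_pdL,
    pdL_finset_sum isOpen_univ S (fun α => fun x => c α * monom α x)
      (fun α _ => contDiffOn_const.mul (contDiff_monom α).contDiffOn) (multiList β) 0 trivial]
  have h1 : ∀ α ∈ S, pdL (multiList β) (fun x => c α * monom α x) 0
      = if α = β then c α * ((∏ i, Nat.factorial (β i) : ℕ) : ℝ) else 0 := by
    intro α _
    rw [pdL_const_mul isOpen_univ (contDiff_monom α).contDiffOn (c α) (multiList β) 0 trivial,
      ← pdPow_eq_pdL, pdPow_monom_zero]
    by_cases h : β = α
    · subst h; simp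
    · rw [if_neg h, if_neg fun hh : α = β => h hh.symm, mul_zero]
  rw [Finset.sum_congr rfl h1, Finset.sum_ite_eq' S β fun α => c α * ((∏ i, Nat.factorial (β i) : ℕ) : ℝ)]

end Aux3
section Aux4

variable {n : ℕ}

def PolyRep (P : (Fin n → ℝ) → ℝ) : Prop :=
  ∃ l : List ((Fin n → ℕ) × ℝ), ∀ x, P x = (l.map fun q => q.2 * monom q.1 x).sum

lemma PolyRep.smooth {P : (Fin n → ℝ) → ℝ} (hP : PolyRep P) : ContDiffOn ℝ ∞ P Set.univ := by
  obtain ⟨l, hl⟩ := hP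
  have h : ContDiffOn ℝ ∞ (fun x => (l.map fun q => q.2 * monom q.1 x).sum) Set.univ :=
    contDiffOn_list_sum l (fun q => fun x => q.2 * monom q.1 x)
      (fun q _ => contDiffOn_const.mul (contDiff_monom q.1).contDiffOn)
  exact h.congr fun x _ => hl x

lemma polyRep_zero : PolyRep (n := n) (fun _ => 0) := ⟨[], by simp⟩

lemma PolyRep.add {P Q : (Fin n → ℝ) → ℝ} (hP : PolyRep P) (hQ : PolyRep Q) :
    PolyRep (fun x => P x + Q x) := by
  obtain ⟨l₁, h₁⟩ := hP; obtain ⟨l₂, h₂⟩ := hQ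
  exact ⟨l₁ ++ l₂, fun x => by
    show P x + Q x = _
    rw [h₁ x, h₂ x, List.map_append, List.sum_append]⟩

lemma list_sum_map_mul_left {β : Type} (l : List β) (f : β → ℝ) (c : ℝ) :
    (l.map fun b => c * f b).sum = c * (l.map f).sum := by
  induction l with
  | nil => simp
  | cons a l ih => simp [ih]; ring

lemma PolyRep.const_mul {P : (Fin n → ℝ) → ℝ} (hP : PolyRep P) (c : ℝ) :
    PolyRep (fun x => c * P x) := by
  obtain ⟨l, hl⟩ := hP
  refine ⟨l.map fun q => (q.1, c * q.2), fun x => ?_⟩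
  show c * P x = _
  rw [hl x, List.map_map, ← list_sum_map_mul_left]
  congr 1
  apply List.map_congr_left
  intro q _
  simp [Function.comp]
  ring

lemma PolyRep.sub {P Q : (Fin n → ℝ) → ℝ} (hP : PolyRep P) (hQ : PolyRep Q) :
    PolyRep (fun x => P x - Q x) := by
  have h1 : PolyRep (fun x => (-1 : ℝ) * Q x) := hQ.const_mul (-1)
  have h2 := hP.add h1
  refine ⟨h2.choose, fun x => ?_⟩
  rw [← h2.choose_spec x]
  ring

lemma monom_add (a b : Fin n → ℕ) (x : Fin n → ℝ) :
    monom (a + b) x = monom a x * monom b x := by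
  rw [monom, monom, monom, ← Finset.prod_mul_distrib]
  exact Finset.prod_congr rfl fun i _ => by simp [pow_add]

lemma list_mul_expand (l₁ l₂ : List ((Fin n → ℕ) × ℝ)) (x : Fin n → ℝ) :
    (l₁.map fun q => q.2 * monom q.1 x).sum * (l₂.map fun q => q.2 * monom q.1 x).sum
      = (l₁.map fun q₁ => (l₂.map fun q₂ => q₁.2 * q₂.2 * monom (q₁.1 + q₂.1) x).sum).sum := by
  induction l₁ with
  | nil => simp
  | cons a l₁ ih =>
    simp only [List.map_cons, List.sum_cons, add_mul, ih]
    congr 1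
    rw [← list_sum_map_mul_left l₂ (fun q => q.2 * monom q.1 x) (a.2 * monom a.1 x)]
    apply congrArg List.sum
    apply List.map_congr_left
    intro q _
    rw [monom_add]
    ring

lemma PolyRep.mul {P Q : (Fin n → ℝ) → ℝ} (hP : PolyRep P) (hQ : PolyRep Q) :
    PolyRep (fun x => P x * Q x) := by
  obtain ⟨l₁, h₁⟩ := hP; obtain ⟨l₂, h₂⟩ := hQ
  refine ⟨l₁.flatMap fun q₁ => l₂.map fun q₂ => (q₁.1 + q₂.1, q₁.2 * q₂.2), fun x => ?_⟩
  show P x * Q x = _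
  rw [h₁ x, h₂ x, list_sum_map_flatMap]
  simp only [List.map_map, Function.comp]
  exact list_mul_expand l₁ l₂ x

lemma PolyRep.finset_sum {β : Type} (s : Finset β) (F : β → (Fin n → ℝ) → ℝ)
    (h : ∀ b ∈ s, PolyRep (F b)) : PolyRep (fun x => ∑ b ∈ s, F b x) := by
  classical
  induction s using Finset.induction_on with
  | empty => simpa using polyRep_zero
  | @insert b s hb ih =>
    have h1 : PolyRep (fun x => F b x + ∑ c ∈ s, F c x) :=
      (h b (Finset.mem_insert_self b s)).add (ih fun c hc => h c (Finset.mem_insert_of_mem hc))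
    refine ⟨h1.choose, fun x => ?_⟩
    show (∑ c ∈ insert b s, F c x) = _
    rw [Finset.sum_insert hb]
    exact h1.choose_spec x

lemma PolyRep.pdd_closure {P : (Fin n → ℝ) → ℝ} (hP : PolyRep P) (m : Fin n) :
    PolyRep (pdd m P) := by
  obtain ⟨l, hl⟩ := hP
  refine ⟨l.map fun q => (dec q.1 m, q.2 * q.1 m), fun x => ?_⟩
  have h1 : pdd m P x = pdd m (fun y => (l.map fun q => q.2 * monom q.1 y).sum) x :=
    pdd_congr isOpen_univ (fun y _ => hl y) m x trivial
  rw [h1, pdd_list_sum isOpen_univ l (fun q => fun y => q.2 * monom q.1 y)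
    (fun q _ => contDiffOn_const.mul (contDiff_monom q.1).contDiffOn) m x trivial,
    List.map_map]
  congr 1
  apply List.map_congr_left
  intro q _
  rw [pdd_const_mul ((contDiff_monom q.1).differentiable (by norm_cast)).differentiableAt q.2 m,
    pdd_monom]
  simp only [Function.comp]
  ring

noncomputable def tcoef (l : List ((Fin n → ℕ) × ℝ)) (γ : Fin n → ℕ) : ℝ :=
  ((l.filter fun q => decide (q.1 = γ)).map Prod.snd).sum

lemma grp (l : List ((Fin n → ℕ) × ℝ)) (T : Finset (Fin n → ℕ)) (hT : ∀ q ∈ l, q.1 ∈ T)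
    (x : Fin n → ℝ) :
    (l.map fun q => q.2 * monom q.1 x).sum = ∑ γ ∈ T, tcoef l γ * monom γ x := by
  classical
  induction l with
  | nil => simp [tcoef]
  | cons q l ih =>
    have htc : ∀ γ, tcoef (q :: l) γ = (if q.1 = γ then q.2 else 0) + tcoef l γ := by
      intro γ
      by_cases h : q.1 = γ <;> simp [tcoef, List.filter_cons, h]
    simp only [List.map_cons, List.sum_cons, htc]
    rw [ih (fun p hp => hT p (by simp [hp])), Finset.sum_congr rfl
      (fun γ _ => add_mul (if q.1 = γ then q.2 else 0) (tcoef l γ) (monom γ x)),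
      Finset.sum_add_distrib]
    have key : ∑ γ ∈ T, (if q.1 = γ then q.2 else 0) * monom γ x = q.2 * monom q.1 x := by
      rw [Finset.sum_congr rfl (fun γ _ => show (if q.1 = γ then q.2 else 0) * monom γ x
          = if γ = q.1 then q.2 * monom γ x else 0 from by
        by_cases h : q.1 = γ
        · rw [if_pos h, if_pos h.symm]
        · rw [if_neg h, if_neg fun hh => h hh.symm, zero_mul]),
        Finset.sum_ite_eq' T q.1 fun γ => q.2 * monom γ x, if_pos (hT q (by simp))]
    rw [key]

lemma polyRep_eq_zero_of_pdPow {P : (Fin n → ℝ) → ℝ} (hP : PolyRep P)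
    (h : ∀ γ, pdPow γ P 0 = 0) : ∀ x, P x = 0 := by
  classical
  obtain ⟨l, hl⟩ := hP
  set T := (l.map Prod.fst).toFinset with hTdef
  have hT : ∀ q ∈ l, q.1 ∈ T := fun q hq => List.mem_toFinset.2 (List.mem_map_of_mem (f := Prod.fst) hq)
  have hgrp : ∀ x, P x = ∑ γ ∈ T, tcoef l γ * monom γ x := fun x => (hl x).trans (grp l T hT x)
  have hc : ∀ γ ∈ T, tcoef l γ = 0 := by
    intro γ hγ
    have h2 : pdPow γ P 0 = pdPow γ (fun x => ∑ γ' ∈ T, tcoef l γ' * monom γ' x) 0 := by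
      rw [pdPow_eq_pdL, pdPow_eq_pdL]
      exact pdL_congr isOpen_univ (fun y _ => hgrp y) (multiList γ) 0 trivial
    rw [h γ, pdPow_polysum, if_pos hγ] at h2
    have hfac : ((∏ i, Nat.factorial (γ i) : ℕ) : ℝ) ≠ 0 := by
      have : 0 < ∏ i, Nat.factorial (γ i) := Finset.prod_pos fun i _ => Nat.factorial_pos (γ i)
      exact_mod_cast this.ne'
    exact (mul_eq_zero.1 h2.symm).resolve_right hfac
  intro x
  rw [hgrp x]
  exact Finset.sum_eq_zero fun γ hγ => by rw [hc γ hγ, zero_mul]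

lemma polyRep_eq_of_pdPow {P Q : (Fin n → ℝ) → ℝ} (hP : PolyRep P) (hQ : PolyRep Q)
    (h : ∀ γ, pdPow γ P 0 = pdPow γ Q 0) : ∀ x, P x = Q x := by
  have hsub : PolyRep (fun x => P x - Q x) := hP.sub hQ
  have hz : ∀ γ, pdPow γ (fun x => P x - Q x) 0 = 0 := by
    intro γ
    rw [pdPow_eq_pdL, pdL_sub isOpen_univ hP.smooth hQ.smooth (multiList γ) 0 trivial,
      ← pdPow_eq_pdL, ← pdPow_eq_pdL, h γ, sub_self]
  intro x
  have := polyRep_eq_zero_of_pdPow hsub hz x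
  linarith

end Aux4
section Aux5

variable {n : ℕ} {U : Set (Fin n → ℝ)}

lemma seqW_multiList (w : Fin n → ℕ) (γ : Fin n → ℕ) : seqW w (multiList γ) = wlen w γ := by
  rw [← wlen_count w (multiList γ)]
  congr 1
  exact funext fun i => count_multiList γ i

lemma splits_seqW (w : Fin n → ℕ) {I : List (Fin n)} {pr : List (Fin n) × List (Fin n)}
    (hpr : pr ∈ splits I) : seqW w pr.1 + seqW w pr.2 = seqW w I := by
  rw [← wlen_count w pr.1, ← wlen_count w pr.2, ← wlen_count w I, wlen, wlen, wlen,
    ← Finset.sum_add_distrib]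
  exact Finset.sum_congr rfl fun i _ => by rw [← Nat.mul_add, mem_splits_count hpr i]

lemma pdL_pdd (I : List (Fin n)) (m : Fin n) (f : (Fin n → ℝ) → ℝ) :
    pdL I (pdd m f) = pdL (I ++ [m]) f := by
  rw [pdL_append]; rfl

lemma pdPow_pdd_eq (hU : IsOpen U) (h0 : (0 : Fin n → ℝ) ∈ U) {f : (Fin n → ℝ) → ℝ}
    (hf : ContDiffOn ℝ ∞ f U) (m : Fin n) (β : Fin n → ℕ) :
    pdPow β (pdd m f) 0 = pdPow (fun i => (multiList β ++ [m]).count i) f 0 := by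
  rw [pdPow_eq_pdL, pdL_pdd]
  exact pdL_eq_pdPow hU hf (multiList β ++ [m]) 0 h0

lemma cnt_append_wlen (w : Fin n → ℕ) (β : Fin n → ℕ) (m : Fin n) :
    wlen w (fun i => (multiList β ++ [m]).count i) = wlen w β + w m := by
  rw [wlen_count, seqW_append, seqW_multiList]
  simp [seqW]

lemma pair_step (w : Fin n → ℕ) (hU : IsOpen U) (h0 : (0 : Fin n → ℝ) ∈ U)
    {f g F G : (Fin n → ℝ) → ℝ}
    (hf : ContDiffOn ℝ ∞ f U) (hg : ContDiffOn ℝ ∞ g U)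
    (hF : ContDiffOn ℝ ∞ F Set.univ) (hG : ContDiffOn ℝ ∞ G Set.univ)
    (p q : ℤ)
    (hFval : ∀ β : Fin n → ℕ, pdPow β F 0 = if (wlen w β : ℤ) = p then pdPow β f 0 else 0)
    (hGval : ∀ β : Fin n → ℕ, pdPow β G 0 = if (wlen w β : ℤ) = q then pdPow β g 0 else 0)
    (hfv : ∀ β : Fin n → ℕ, (wlen w β : ℤ) < p → pdPow β f 0 = 0)
    (hgv : ∀ β : Fin n → ℕ, (wlen w β : ℤ) < q → pdPow β g 0 = 0)
    (γ : Fin n → ℕ) :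
    pdPow γ (fun y => F y * G y) 0
      = if (wlen w γ : ℤ) = p + q then pdPow γ (fun y => f y * g y) 0 else 0 := by
  rw [pdPow_eq_pdL, pdL_mul isOpen_univ hF hG (multiList γ) 0 trivial]
  have hterm : ∀ pr ∈ splits (multiList γ),
      pdL pr.1 F 0 * pdL pr.2 G 0
        = (if (seqW w pr.1 : ℤ) = p ∧ (seqW w pr.2 : ℤ) = q
            then pdL pr.1 f 0 * pdL pr.2 g 0 else 0) := by
    intro pr _
    have h1 : pdL pr.1 F 0
        = if (seqW w pr.1 : ℤ) = p then pdPow (fun i => pr.1.count i) f 0 else 0 := by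
      rw [pdL_eq_pdPow isOpen_univ hF pr.1 0 trivial, hFval, wlen_count]
    have h2 : pdL pr.2 G 0
        = if (seqW w pr.2 : ℤ) = q then pdPow (fun i => pr.2.count i) g 0 else 0 := by
      rw [pdL_eq_pdPow isOpen_univ hG pr.2 0 trivial, hGval, wlen_count]
    have h1f : pdL pr.1 f 0 = pdPow (fun i => pr.1.count i) f 0 := pdL_eq_pdPow hU hf pr.1 0 h0
    have h2g : pdL pr.2 g 0 = pdPow (fun i => pr.2.count i) g 0 := pdL_eq_pdPow hU hg pr.2 0 h0
    rw [h1, h2, h1f, h2g]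
    by_cases hs : (seqW w pr.1 : ℤ) = p
    · by_cases ht : (seqW w pr.2 : ℤ) = q
      · simp [hs, ht]
      · simp [hs, ht]
    · simp [hs]
  by_cases hγ : (wlen w γ : ℤ) = p + q
  · rw [if_pos hγ]
    have hterm2 : ∀ pr ∈ splits (multiList γ),
        pdL pr.1 F 0 * pdL pr.2 G 0 = pdL pr.1 f 0 * pdL pr.2 g 0 := by
      intro pr hpr
      rw [hterm pr hpr]
      have hab : (seqW w pr.1 : ℤ) + (seqW w pr.2 : ℤ) = p + q := by
        have h3 := splits_seqW w hpr
        rw [seqW_multiList] at h3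
        push_cast [← h3] at hγ ⊢
        omega
      by_cases hc : (seqW w pr.1 : ℤ) = p ∧ (seqW w pr.2 : ℤ) = q
      · rw [if_pos hc]
      · rw [if_neg hc]
        rcases lt_trichotomy ((seqW w pr.1 : ℤ)) p with hlt | heq | hgt
        · have hz : pdL pr.1 f 0 = 0 := by
            rw [pdL_eq_pdPow hU hf pr.1 0 h0]
            exact hfv _ (by rw [wlen_count]; exact hlt)
          rw [hz, zero_mul]
        · exact absurd ⟨heq, by omega⟩ hc
        · have hz : pdL pr.2 g 0 = 0 := by
            rw [pdL_eq_pdPow hU hg pr.2 0 h0]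
            exact hgv _ (by rw [wlen_count]; omega)
          rw [hz, mul_zero]
    rw [List.map_congr_left hterm2, pdPow_eq_pdL, pdL_mul hU hf hg (multiList γ) 0 h0]
  · rw [if_neg hγ]
    have hterm3 : ∀ pr ∈ splits (multiList γ),
        (fun pr => pdL pr.1 F 0 * pdL pr.2 G 0) pr = (fun _ => (0 : ℝ)) pr := by
      intro pr hpr
      simp only
      rw [hterm pr hpr]
      have hab : (seqW w pr.1 : ℤ) + (seqW w pr.2 : ℤ) = (wlen w γ : ℤ) := by
        have h3 := splits_seqW w hpr
        rw [seqW_multiList] at h3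
        push_cast [← h3]
        omega
      rw [if_neg fun hc => hγ (by omega)]
    rw [List.map_congr_left hterm3]
    simp

lemma D_step (w : Fin n → ℕ) (hwpos : ∀ i, 0 < w i) (hU : IsOpen U)
    (h0 : (0 : Fin n → ℝ) ∈ U)
    {h g : (Fin n → ℝ) → ℝ} (hh : ContDiffOn ℝ ∞ h U) (hgs : ContDiffOn ℝ ∞ g U)
    (c : ℤ) (hgv : ∀ β : Fin n → ℕ, (wlen w β : ℤ) < c → pdPow β g 0 = 0)
    (γ : Fin n → ℕ) (hγ : (wlen w γ : ℤ) ≤ c) :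
    pdPow γ (fun y => h y * g y) 0
      = if (wlen w γ : ℤ) = c then h 0 * pdPow γ g 0 else 0 := by
  rw [pdPow_eq_pdL, pdL_mul hU hh hgs (multiList γ) 0 h0]
  by_cases hcrit : (wlen w γ : ℤ) = c
  · rw [if_pos hcrit]
    rw [sum_splits_of_nil (fun pr => pdL pr.1 h 0 * pdL pr.2 g 0) (fun pr hpr hne => by
      have hpos : 0 < seqW w pr.1 := seqW_pos w hwpos hne
      have hsum := splits_seqW w hpr
      rw [seqW_multiList] at hsum
      have hz : pdL pr.2 g 0 = 0 := by
        rw [pdL_eq_pdPow hU hgs pr.2 0 h0]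
        exact hgv _ (by rw [wlen_count]; omega)
      show pdL pr.1 h 0 * pdL pr.2 g 0 = 0
      rw [hz, mul_zero])]
    rfl
  · rw [if_neg hcrit]
    have hterm : ∀ pr ∈ splits (multiList γ),
        (fun pr => pdL pr.1 h 0 * pdL pr.2 g 0) pr = (fun _ => (0 : ℝ)) pr := by
      intro pr hpr
      simp only
      have hsum := splits_seqW w hpr
      rw [seqW_multiList] at hsum
      have hz : pdL pr.2 g 0 = 0 := by
        rw [pdL_eq_pdPow hU hgs pr.2 0 h0]
        exact hgv _ (by rw [wlen_count]; omega)
      rw [hz, mul_zero]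
    rw [List.map_congr_left hterm]
    simp

end Aux5
section Aux6

variable {n : ℕ}

lemma vfPart_pdPow (w : Fin n → ℕ) (hwpos : ∀ i, 0 < w i)
    (X : (Fin n → ℝ) → (Fin n → ℝ)) (ℓ : ℤ) (k : Fin n) (β : Fin n → ℕ) :
    pdPow β (fun x => vfPart w X ℓ x k) 0
      = if (wlen w β : ℤ) = ℓ + w k then pdPow β (fun y => X y k) 0 else 0 := by
  classical
  have hps : pdPow β (fun x => vfPart w X ℓ x k) 0
      = if β ∈ (mIdx n ((ℓ + w k).toNat + 1)).filter (fun α => (wlen w α : ℤ) = ℓ + w k)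
        then taylorCoeff β (fun y => X y k) * ((∏ i, Nat.factorial (β i) : ℕ) : ℝ) else 0 :=
    pdPow_polysum _ (fun α => taylorCoeff α (fun y => X y k)) β
  rw [hps]
  by_cases hβ : (wlen w β : ℤ) = ℓ + w k
  · rw [if_pos hβ]
    have hmem : β ∈ (mIdx n ((ℓ + w k).toNat + 1)).filter
        (fun α => (wlen w α : ℤ) = ℓ + w k) := by
      rw [Finset.mem_filter]
      refine ⟨?_, hβ⟩
      rw [mIdx, Fintype.mem_piFinset]
      intro i
      rw [Finset.mem_range]
      have h1 : β i ≤ wlen w β := by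
        calc β i = 1 * β i := (one_mul _).symm
        _ ≤ w i * β i := Nat.mul_le_mul_right _ (hwpos i)
        _ ≤ wlen w β := Finset.single_le_sum (f := fun i => w i * β i)
            (fun i _ => Nat.zero_le _) (Finset.mem_univ i)
      have h2 : ((ℓ + (w k : ℤ)).toNat : ℤ) = ℓ + w k := Int.toNat_of_nonneg (by omega)
      omega
    rw [if_pos hmem, taylorCoeff]
    have hfac : ((∏ i, Nat.factorial (β i) : ℕ) : ℝ) ≠ 0 := by
      have hp : 0 < ∏ i, Nat.factorial (β i) := Finset.prod_pos fun i _ => Nat.factorial_pos _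
      exact_mod_cast hp.ne'
    rw [mul_comm, ← mul_assoc, mul_inv_cancel₀ hfac, one_mul]
  · have hnm : β ∉ (mIdx n ((ℓ + w k).toNat + 1)).filter
        (fun α => (wlen w α : ℤ) = ℓ + w k) :=
      fun hmem => hβ (Finset.mem_filter.1 hmem).2
    rw [if_neg hβ, if_neg hnm]

lemma polyRep_vfPart (w : Fin n → ℕ) (X : (Fin n → ℝ) → (Fin n → ℝ)) (ℓ : ℤ) (k : Fin n) :
    PolyRep (fun x => vfPart w X ℓ x k) := by
  have h : PolyRep (fun x => ∑ α ∈ (mIdx n ((ℓ + w k).toNat + 1)).filter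
      (fun α => (wlen w α : ℤ) = ℓ + w k), taylorCoeff α (fun y => X y k) * monom α x) :=
    PolyRep.finset_sum _ (fun α => fun x => taylorCoeff α (fun y => X y k) * monom α x)
      (fun α _ => ⟨[(α, taylorCoeff α (fun y => X y k))], fun x => by simp⟩)
  exact h

lemma lieBk_apply_eq (X Y : (Fin n → ℝ) → (Fin n → ℝ)) (x : Fin n → ℝ)
    (hX : ∀ k, DifferentiableAt ℝ (fun y => X y k) x)
    (hY : ∀ k, DifferentiableAt ℝ (fun y => Y y k) x) (k : Fin n) :
    lieBk X Y x k = (∑ m, pdd m (fun y => Y y k) x * X x m)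
      - ∑ m, pdd m (fun y => X y k) x * Y x m := by
  have hv : ∀ v : Fin n → ℝ, v = ∑ m, v m • (Pi.single m 1 : Fin n → ℝ) := by
    intro v
    funext j
    rw [Finset.sum_apply]
    simp [Pi.single_apply]
  have hfd : ∀ (Z : (Fin n → ℝ) → (Fin n → ℝ)),
      (∀ k, DifferentiableAt ℝ (fun y => Z y k) x) →
      ∀ v : Fin n → ℝ, fderiv ℝ Z x v k = ∑ m, pdd m (fun y => Z y k) x * v m := by
    intro Z hZ v
    have hpi : fderiv ℝ Z x = ContinuousLinearMap.pi (fun k => fderiv ℝ (fun y => Z y k) x) :=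
      fderiv_pi hZ
    rw [hpi, ContinuousLinearMap.pi_apply]
    calc fderiv ℝ (fun y => Z y k) x v
        = fderiv ℝ (fun y => Z y k) x (∑ m, v m • (Pi.single m 1 : Fin n → ℝ)) := by rw [← hv v]
      _ = ∑ m, v m * fderiv ℝ (fun y => Z y k) x (Pi.single m 1) := by
          rw [map_sum]
          exact Finset.sum_congr rfl fun m _ => by rw [map_smul]; rfl
      _ = ∑ m, pdd m (fun y => Z y k) x * v m := Finset.sum_congr rfl fun m _ => mul_comm _ _
  show (fderiv ℝ Y x (X x) - fderiv ℝ X x (Y x)) k = _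
  rw [Pi.sub_apply, hfd Y hY (X x), hfd X hX (Y x)]

end Aux6
section Aux7

variable {n : ℕ} {U : Set (Fin n → ℝ)}

lemma pdPow_fsum {β : Type} (hU : IsOpen U) (h0 : (0 : Fin n → ℝ) ∈ U) (s : Finset β)
    (F : β → (Fin n → ℝ) → ℝ) (hF : ∀ b ∈ s, ContDiffOn ℝ ∞ (F b) U) (γ : Fin n → ℕ) :
    pdPow γ (fun x => ∑ b ∈ s, F b x) 0 = ∑ b ∈ s, pdPow γ (F b) 0 := by
  rw [pdPow_eq_pdL, pdL_finset_sum hU s F hF (multiList γ) 0 h0]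
  exact Finset.sum_congr rfl fun b _ => by rw [pdPow_eq_pdL]

lemma pdPow_sub_sum (hU : IsOpen U) (h0 : (0 : Fin n → ℝ) ∈ U)
    {A B : Fin n → (Fin n → ℝ) → ℝ}
    (hA : ∀ m, ContDiffOn ℝ ∞ (A m) U) (hB : ∀ m, ContDiffOn ℝ ∞ (B m) U) (γ : Fin n → ℕ) :
    pdPow γ (fun x => (∑ m, A m x) - ∑ m, B m x) 0
      = (∑ m, pdPow γ (A m) 0) - ∑ m, pdPow γ (B m) 0 := by
  rw [pdPow_eq_pdL]
  have h1 : pdL (multiList γ) (fun x => (∑ m, A m x) - ∑ m, B m x) 0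
      = pdL (multiList γ) (fun x => ∑ m, A m x) 0 - pdL (multiList γ) (fun x => ∑ m, B m x) 0 :=
    pdL_sub hU (ContDiffOn.sum fun m _ => hA m) (ContDiffOn.sum fun m _ => hB m) (multiList γ) 0 h0
  rw [h1, pdL_finset_sum hU Finset.univ A (fun m _ => hA m) (multiList γ) 0 h0,
    pdL_finset_sum hU Finset.univ B (fun m _ => hB m) (multiList γ) 0 h0]
  simp only [← pdPow_eq_pdL]

end Aux7
/-- The commutator relations of the model vector fields. -/
theorem model_bracket
    {n : ℕ} (hn : 0 < n) {w : Fin n → ℕ} (hw : IsWeight w)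
    {r : ℕ} (hr : ∀ i, w i ≤ r) (hr' : ∃ i, w i = r)
    {U : Set (Fin n → ℝ)} (hU : IsOpen U) (h0 : (0 : Fin n → ℝ) ∈ U)
    {X : Fin n → (Fin n → ℝ) → (Fin n → ℝ)}
    (hX : ∀ j, ContDiffOn ℝ (⊤ : ℕ∞) (X j) U)
    (L : Fin n → Fin n → Fin n → (Fin n → ℝ) → ℝ)
    (hL : ∀ i j k, ContDiffOn ℝ (⊤ : ℕ∞) (L i j k) U)
    (hbk : ∀ i j, ∀ x ∈ U, lieBk (X i) (X j) x =
      ∑ k ∈ Finset.univ.filter (fun k => w k ≤ w i + w j), L i j k x • X k x)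
    (hwt : ∀ j, VFWeightEq w (X j) (-(w j : ℤ)))
    (i j : Fin n) :
    (w i + w j ≤ r →
      lieBk (vfPart w (X i) (-(w i : ℤ))) (vfPart w (X j) (-(w j : ℤ))) =
        fun x => ∑ k ∈ Finset.univ.filter (fun k => w k = w i + w j),
          L i j k 0 • vfPart w (X k) (-(w k : ℤ)) x) ∧
    (r < w i + w j →
      lieBk (vfPart w (X i) (-(w i : ℤ))) (vfPart w (X j) (-(w j : ℤ))) = 0) := by
  classical
  have hwpos := hw.pos
  have hXs : ∀ a k, ContDiffOn ℝ ∞ (fun y => X a y k) U :=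
    fun a k => (contDiffOn_pi.1 ((hX a).of_le (by simp))) k
  have hLs : ∀ k, ContDiffOn ℝ ∞ (L i j k) U := fun k => (hL i j k).of_le (by simp)
  have hZrep : ∀ (a k : Fin n), PolyRep (fun x => vfPart w (X a) (-(w a : ℤ)) x k) :=
    fun a k => polyRep_vfPart w (X a) _ k
  have hZsm : ∀ (a k : Fin n),
      ContDiffOn ℝ ∞ (fun x => vfPart w (X a) (-(w a : ℤ)) x k) Set.univ :=
    fun a k => (hZrep a k).smooth
  have hZval : ∀ (a k : Fin n) (β : Fin n → ℕ),
      pdPow β (fun x => vfPart w (X a) (-(w a : ℤ)) x k) 0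
        = if (wlen w β : ℤ) = -(w a : ℤ) + w k then pdPow β (fun y => X a y k) 0 else 0 :=
    fun a k β => vfPart_pdPow w hwpos (X a) _ k β
  have hXvan : ∀ (a k : Fin n) (β : Fin n → ℕ), (wlen w β : ℤ) < -(w a : ℤ) + w k →
      pdPow β (fun y => X a y k) 0 = 0 := fun a k => (hwt a).1 k
  have hFval : ∀ (a : Fin n) (k m : Fin n) (β : Fin n → ℕ),
      pdPow β (pdd m (fun x => vfPart w (X a) (-(w a : ℤ)) x k)) 0
        = if (wlen w β : ℤ) = (w k : ℤ) - w a - w m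
          then pdPow β (pdd m (fun y => X a y k)) 0 else 0 := by
    intro a k m β
    rw [pdPow_pdd_eq isOpen_univ trivial (hZsm a k) m β, hZval a k _,
      cnt_append_wlen w β m, pdPow_pdd_eq hU h0 (hXs a k) m β]
    by_cases hc : (wlen w β : ℤ) = (w k : ℤ) - w a - w m
    · rw [if_pos hc, if_pos (by push_cast; omega)]
    · rw [if_neg hc, if_neg (by push_cast; omega)]
  have hfv : ∀ (a : Fin n) (k m : Fin n) (β : Fin n → ℕ),
      (wlen w β : ℤ) < (w k : ℤ) - w a - w m → pdPow β (pdd m (fun y => X a y k)) 0 = 0 := by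
    intro a k m β hβ
    rw [pdPow_pdd_eq hU h0 (hXs a k) m β]
    apply hXvan a k
    rw [cnt_append_wlen w β m]
    push_cast
    omega
  have hProd : ∀ (a b k' m : Fin n) (γ : Fin n → ℕ),
      pdPow γ (fun x => pdd m (fun y => vfPart w (X b) (-(w b : ℤ)) y k') x
          * vfPart w (X a) (-(w a : ℤ)) x m) 0
        = if (wlen w γ : ℤ) = ((w k' : ℤ) - w b - w m) + ((w m : ℤ) - w a)
          then pdPow γ (fun x => pdd m (fun y => X b y k') x * X a x m) 0 else 0 := by
    intro a b k' m γ
    exact pair_step w hU h0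
      (pdd_smooth hU (hXs b k') m) (hXs a m)
      (pdd_smooth isOpen_univ (hZsm b k') m) (hZsm a m)
      ((w k' : ℤ) - w b - w m) ((w m : ℤ) - w a)
      (hFval b k' m)
      (fun β => by rw [hZval a m β]; exact if_congr (by constructor <;> intro <;> omega) rfl rfl)
      (hfv b k' m) (fun β hβ => hXvan a m β (by omega)) γ
  have hsmZprod : ∀ (a b k' m : Fin n), ContDiffOn ℝ ∞
      (fun x => pdd m (fun y => vfPart w (X b) (-(w b : ℤ)) y k') x
        * vfPart w (X a) (-(w a : ℤ)) x m) Set.univ :=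
    fun a b k' m => (pdd_smooth isOpen_univ (hZsm b k') m).mul (hZsm a m)
  have hsmXprod : ∀ (a b k' m : Fin n), ContDiffOn ℝ ∞
      (fun x => pdd m (fun y => X b y k') x * X a x m) U :=
    fun a b k' m => (pdd_smooth hU (hXs b k') m).mul (hXs a m)
  have hA : ∀ (k' : Fin n) (γ : Fin n → ℕ),
      pdPow γ (fun x => (∑ m, pdd m (fun y => vfPart w (X j) (-(w j : ℤ)) y k') x
            * vfPart w (X i) (-(w i : ℤ)) x m)
          - ∑ m, pdd m (fun y => vfPart w (X i) (-(w i : ℤ)) y k') x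
            * vfPart w (X j) (-(w j : ℤ)) x m) 0
        = if (wlen w γ : ℤ) = (w k' : ℤ) - w i - w j
          then (∑ m, pdPow γ (fun x => pdd m (fun y => X j y k') x * X i x m) 0)
             - ∑ m, pdPow γ (fun x => pdd m (fun y => X i y k') x * X j x m) 0
          else 0 := by
    intro k' γ
    have e0 : pdPow γ (fun x => (∑ m, pdd m (fun y => vfPart w (X j) (-(w j : ℤ)) y k') x
            * vfPart w (X i) (-(w i : ℤ)) x m)
          - ∑ m, pdd m (fun y => vfPart w (X i) (-(w i : ℤ)) y k') x
            * vfPart w (X j) (-(w j : ℤ)) x m) 0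
        = (∑ m, pdPow γ (fun x => pdd m (fun y => vfPart w (X j) (-(w j : ℤ)) y k') x
            * vfPart w (X i) (-(w i : ℤ)) x m) 0)
          - ∑ m, pdPow γ (fun x => pdd m (fun y => vfPart w (X i) (-(w i : ℤ)) y k') x
            * vfPart w (X j) (-(w j : ℤ)) x m) 0 :=
      pdPow_sub_sum isOpen_univ trivial (fun m => hsmZprod i j k' m) (fun m => hsmZprod j i k' m) γ
    rw [e0]
    have e1 : ∀ m : Fin n,
        pdPow γ (fun x => pdd m (fun y => vfPart w (X j) (-(w j : ℤ)) y k') x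
          * vfPart w (X i) (-(w i : ℤ)) x m) 0
        = if (wlen w γ : ℤ) = (w k' : ℤ) - w i - w j
          then pdPow γ (fun x => pdd m (fun y => X j y k') x * X i x m) 0 else 0 := by
      intro m
      rw [hProd i j k' m γ]
      exact if_congr (by constructor <;> intro <;> omega) rfl rfl
    have e2 : ∀ m : Fin n,
        pdPow γ (fun x => pdd m (fun y => vfPart w (X i) (-(w i : ℤ)) y k') x
          * vfPart w (X j) (-(w j : ℤ)) x m) 0
        = if (wlen w γ : ℤ) = (w k' : ℤ) - w i - w j
          then pdPow γ (fun x => pdd m (fun y => X i y k') x * X j x m) 0 else 0 := by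
      intro m
      rw [hProd j i k' m γ]
      exact if_congr (by constructor <;> intro <;> omega) rfl rfl
    rw [Finset.sum_congr rfl fun m _ => e1 m, Finset.sum_congr rfl fun m _ => e2 m]
    by_cases hcond : (wlen w γ : ℤ) = (w k' : ℤ) - w i - w j
    · simp [hcond]
    · simp [hcond]
  have hB : ∀ (k' : Fin n) (γ : Fin n → ℕ),
      pdPow γ (fun x => lieBk (X i) (X j) x k') 0
        = (∑ m, pdPow γ (fun x => pdd m (fun y => X j y k') x * X i x m) 0)
          - ∑ m, pdPow γ (fun x => pdd m (fun y => X i y k') x * X j x m) 0 := by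
    intro k' γ
    have hexp : ∀ y ∈ U, lieBk (X i) (X j) y k'
        = (∑ m, pdd m (fun y' => X j y' k') y * X i y m)
          - ∑ m, pdd m (fun y' => X i y' k') y * X j y m :=
      fun y hy => lieBk_apply_eq (X i) (X j) y (fun k => diffAt hU (hXs i k) hy)
        (fun k => diffAt hU (hXs j k) hy) k'
    have e1 : pdPow γ (fun x => lieBk (X i) (X j) x k') 0
        = pdPow γ (fun x => (∑ m, pdd m (fun y' => X j y' k') x * X i x m)
            - ∑ m, pdd m (fun y' => X i y' k') x * X j x m) 0 := by
      rw [pdPow_eq_pdL, pdPow_eq_pdL]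
      exact pdL_congr hU hexp (multiList γ) 0 h0
    rw [e1]
    exact pdPow_sub_sum hU h0 (fun m => hsmXprod i j k' m) (fun m => hsmXprod j i k' m) γ
  have hD : ∀ (k' : Fin n) (γ : Fin n → ℕ),
      pdPow γ (fun x => lieBk (X i) (X j) x k') 0
        = ∑ k ∈ Finset.univ.filter (fun k => w k ≤ w i + w j),
            pdPow γ (fun x => L i j k x * X k x k') 0 := by
    intro k' γ
    have hexp : ∀ y ∈ U, lieBk (X i) (X j) y k'
        = ∑ k ∈ Finset.univ.filter (fun k => w k ≤ w i + w j), L i j k y * X k y k' := by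
      intro y hy
      have h1 := congrFun (hbk i j y hy) k'
      rw [h1, Finset.sum_apply]
      rfl
    have e1 : pdPow γ (fun x => lieBk (X i) (X j) x k') 0
        = pdPow γ (fun x => ∑ k ∈ Finset.univ.filter (fun k => w k ≤ w i + w j),
            L i j k x * X k x k') 0 := by
      rw [pdPow_eq_pdL, pdPow_eq_pdL]
      exact pdL_congr hU hexp (multiList γ) 0 h0
    rw [e1]
    exact pdPow_fsum hU h0 _ _ (fun k _ => (hLs k).mul (hXs k k')) γ
  have hC : ∀ (k' : Fin n) (γ : Fin n → ℕ),
      pdPow γ (fun x => ∑ k ∈ Finset.univ.filter (fun k => w k = w i + w j),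
          L i j k 0 * vfPart w (X k) (-(w k : ℤ)) x k') 0
        = if (wlen w γ : ℤ) = (w k' : ℤ) - w i - w j
          then ∑ k ∈ Finset.univ.filter (fun k => w k = w i + w j),
            L i j k 0 * pdPow γ (fun y => X k y k') 0
          else 0 := by
    intro k' γ
    have e1 : pdPow γ (fun x => ∑ k ∈ Finset.univ.filter (fun k => w k = w i + w j),
          L i j k 0 * vfPart w (X k) (-(w k : ℤ)) x k') 0
        = ∑ k ∈ Finset.univ.filter (fun k => w k = w i + w j),
            pdPow γ (fun x => L i j k 0 * vfPart w (X k) (-(w k : ℤ)) x k') 0 :=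
      pdPow_fsum isOpen_univ trivial _ _ (fun k _ => contDiffOn_const.mul (hZsm k k')) γ
    rw [e1]
    have e2 : ∀ k ∈ Finset.univ.filter (fun k => w k = w i + w j),
        pdPow γ (fun x => L i j k 0 * vfPart w (X k) (-(w k : ℤ)) x k') 0
          = if (wlen w γ : ℤ) = (w k' : ℤ) - w i - w j
            then L i j k 0 * pdPow γ (fun y => X k y k') 0 else 0 := by
      intro k hk
      have hwk : w k = w i + w j := (Finset.mem_filter.1 hk).2
      have e3 : pdPow γ (fun x => L i j k 0 * vfPart w (X k) (-(w k : ℤ)) x k') 0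
          = L i j k 0 * pdPow γ (fun x => vfPart w (X k) (-(w k : ℤ)) x k') 0 := by
        rw [pdPow_eq_pdL, pdPow_eq_pdL]
        exact pdL_const_mul isOpen_univ (hZsm k k') _ (multiList γ) 0 trivial
      rw [e3, hZval k k' γ]
      by_cases hcond : (wlen w γ : ℤ) = (w k' : ℤ) - w i - w j
      · rw [if_pos (show (wlen w γ : ℤ) = -(w k : ℤ) + w k' by omega), if_pos hcond]
      · rw [if_neg (show ¬(wlen w γ : ℤ) = -(w k : ℤ) + w k' by omega), if_neg hcond, mul_zero]
    rw [Finset.sum_congr rfl e2]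
    by_cases hcond : (wlen w γ : ℤ) = (w k' : ℤ) - w i - w j
    · rw [if_pos hcond]; exact Finset.sum_congr rfl fun k _ => if_pos hcond
    · rw [if_neg hcond]; exact Finset.sum_eq_zero fun k _ => if_neg hcond
  have hDcrit : ∀ (k' : Fin n) (γ : Fin n → ℕ),
      (wlen w γ : ℤ) = (w k' : ℤ) - w i - w j →
      (∑ k ∈ Finset.univ.filter (fun k => w k ≤ w i + w j),
          pdPow γ (fun x => L i j k x * X k x k') 0)
        = ∑ k ∈ Finset.univ.filter (fun k => w k = w i + w j),
            L i j k 0 * pdPow γ (fun y => X k y k') 0 := by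
    intro k' γ hcrit
    have e1 : ∀ k ∈ Finset.univ.filter (fun k => w k ≤ w i + w j),
        pdPow γ (fun x => L i j k x * X k x k') 0
          = if w k = w i + w j then L i j k 0 * pdPow γ (fun y => X k y k') 0 else 0 := by
      intro k hk
      have hwk : w k ≤ w i + w j := (Finset.mem_filter.1 hk).2
      have e2 : pdPow γ (fun x => L i j k x * X k x k') 0
          = if (wlen w γ : ℤ) = (w k' : ℤ) - w k
            then L i j k 0 * pdPow γ (fun y => X k y k') 0 else 0 :=
        D_step w hwpos hU h0 (hLs k) (hXs k k') ((w k' : ℤ) - w k)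
          (fun β hβ => hXvan k k' β (by omega)) γ (by omega)
      rw [e2]
      by_cases hcase : w k = w i + w j
      · rw [if_pos (by omega : (wlen w γ : ℤ) = (w k' : ℤ) - w k), if_pos hcase]
      · rw [if_neg (by omega : ¬(wlen w γ : ℤ) = (w k' : ℤ) - w k), if_neg hcase]
    rw [Finset.sum_congr rfl e1, Finset.sum_filter, Finset.sum_filter]
    refine Finset.sum_congr rfl fun k _ => ?_
    by_cases h1 : w k = w i + w j
    · have h2 : w k ≤ w i + w j := by omega
      simp [h1, h2]
    · by_cases h2 : w k ≤ w i + w j <;> simp [h1, h2]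
  have hPrep : ∀ k' : Fin n, PolyRep (fun x =>
      (∑ m, pdd m (fun y => vfPart w (X j) (-(w j : ℤ)) y k') x
        * vfPart w (X i) (-(w i : ℤ)) x m)
      - ∑ m, pdd m (fun y => vfPart w (X i) (-(w i : ℤ)) y k') x
        * vfPart w (X j) (-(w j : ℤ)) x m) := by
    intro k'
    exact (PolyRep.finset_sum Finset.univ _
        (fun m _ => ((hZrep j k').pdd_closure m).mul (hZrep i m))).sub
      (PolyRep.finset_sum Finset.univ _
        (fun m _ => ((hZrep i k').pdd_closure m).mul (hZrep j m)))
  have hLHS : ∀ (x : Fin n → ℝ) (k' : Fin n),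
      lieBk (vfPart w (X i) (-(w i : ℤ))) (vfPart w (X j) (-(w j : ℤ))) x k'
        = (∑ m, pdd m (fun y => vfPart w (X j) (-(w j : ℤ)) y k') x
            * vfPart w (X i) (-(w i : ℤ)) x m)
          - ∑ m, pdd m (fun y => vfPart w (X i) (-(w i : ℤ)) y k') x
            * vfPart w (X j) (-(w j : ℤ)) x m := by
    intro x k'
    exact lieBk_apply_eq _ _ x (fun k => diffAt isOpen_univ (hZsm i k) trivial)
      (fun k => diffAt isOpen_univ (hZsm j k) trivial) k'
  constructor
  · intro _
    funext x
    funext k'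
    have hQrep : PolyRep (fun x => ∑ k ∈ Finset.univ.filter (fun k => w k = w i + w j),
        L i j k 0 * vfPart w (X k) (-(w k : ℤ)) x k') :=
      PolyRep.finset_sum _ _ (fun k _ => (hZrep k k').const_mul (L i j k 0))
    have hEq : ∀ γ : Fin n → ℕ,
        pdPow γ (fun x => (∑ m, pdd m (fun y => vfPart w (X j) (-(w j : ℤ)) y k') x
              * vfPart w (X i) (-(w i : ℤ)) x m)
            - ∑ m, pdd m (fun y => vfPart w (X i) (-(w i : ℤ)) y k') x
              * vfPart w (X j) (-(w j : ℤ)) x m) 0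
          = pdPow γ (fun x => ∑ k ∈ Finset.univ.filter (fun k => w k = w i + w j),
              L i j k 0 * vfPart w (X k) (-(w k : ℤ)) x k') 0 := by
      intro γ
      rw [hA k' γ, hC k' γ]
      by_cases hcond : (wlen w γ : ℤ) = (w k' : ℤ) - w i - w j
      · rw [if_pos hcond, if_pos hcond, ← hB k' γ, hD k' γ]
        exact hDcrit k' γ hcond
      · rw [if_neg hcond, if_neg hcond]
    have hfin := polyRep_eq_of_pdPow (hPrep k') hQrep hEq x
    rw [hLHS x k', hfin]
    show _ = (∑ k ∈ Finset.univ.filter (fun k => w k = w i + w j),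
        L i j k 0 • vfPart w (X k) (-(w k : ℤ)) x) k'
    rw [Finset.sum_apply]
    rfl
  · intro hgt
    funext x
    funext k'
    have hzero : ∀ γ : Fin n → ℕ,
        pdPow γ (fun x => (∑ m, pdd m (fun y => vfPart w (X j) (-(w j : ℤ)) y k') x
              * vfPart w (X i) (-(w i : ℤ)) x m)
            - ∑ m, pdd m (fun y => vfPart w (X i) (-(w i : ℤ)) y k') x
              * vfPart w (X j) (-(w j : ℤ)) x m) 0 = 0 := by
      intro γ
      rw [hA k' γ]
      have hk' := hr k'
      rw [if_neg (by omega : ¬(wlen w γ : ℤ) = (w k' : ℤ) - w i - w j)]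
    rw [hLHS x k', polyRep_eq_zero_of_pdPow (hPrep k') hzero x]
    rfl

end Carnot
end

section
/- For j = 1,…,n let Y_j be a smooth vector field on ℝⁿ which is homogeneous of degree −w_j with respect to the anisotropic dilations and satisfies Y_j(0) = e_j. Let φ : ℝⁿ → ℝⁿ be a w-homogeneous smooth diffeomorphism such that Dφ(x)[Y_j(x)] = Y_j(φ(x)) for all x ∈ ℝⁿ and all j = 1,…,n. Then φ is the identity map of ℝⁿ. -/
open scoped BigOperators
open Filter Topology

namespace Carnot

section AuxStmt17

private lemma aux_lim17 (g : ℝ → ℝ) (hg : Continuous g) (e : ℕ) (c : ℝ)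
    (h : ∀ t : ℝ, t ≠ 0 → t ^ e * g t = c) : c = 0 ^ e * g 0 := by
  have h1 : Tendsto (fun t : ℝ => t ^ e * g t) (𝓝[≠] (0:ℝ)) (𝓝 ((0:ℝ) ^ e * g 0)) :=
    (((continuous_pow e).mul hg).tendsto 0).mono_left nhdsWithin_le_nhds
  have h2 : Tendsto (fun t : ℝ => t ^ e * g t) (𝓝[≠] (0:ℝ)) (𝓝 c) := by
    refine Tendsto.congr' ?_ tendsto_const_nhds
    filter_upwards [self_mem_nhdsWithin] with t ht
    exact (h t ht).symm
  exact tendsto_nhds_unique h2 h1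

private lemma clm_sum17 {n : ℕ} (ℓ : (Fin n → ℝ) →L[ℝ] ℝ) (v : Fin n → ℝ) :
    ℓ v = ∑ i, v i * ℓ (Pi.single i 1) := by
  have hv : v = ∑ i, v i • (Pi.single i 1 : Fin n → ℝ) := by
    funext j
    simp [Finset.sum_apply, Pi.single_apply]
  conv_lhs => rw [hv]
  rw [map_sum]
  simp [smul_eq_mul]

private noncomputable def dilL {n : ℕ} (w : Fin n → ℕ) (t : ℝ) :
    (Fin n → ℝ) →L[ℝ] (Fin n → ℝ) :=
  ContinuousLinearMap.pi fun i => (t ^ w i) • ContinuousLinearMap.proj i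

private lemma dilL_apply {n : ℕ} (w : Fin n → ℕ) (t : ℝ) (x : Fin n → ℝ) :
    dilL w t x = dil w t x := rfl

private lemma dilL_single {n : ℕ} (w : Fin n → ℕ) (t : ℝ) (m : Fin n) :
    dilL w t (Pi.single m (1:ℝ) : Fin n → ℝ) = (t ^ w m) • (Pi.single m (1:ℝ) : Fin n → ℝ) := by
  funext i
  rcases eq_or_ne i m with rfl | h
  · simp [dilL, Pi.single_eq_same]
  · simp [dilL, Pi.single_eq_of_ne h]

private lemma high_partial_zero17 {n : ℕ} (w : Fin n → ℕ) (p : (Fin n → ℝ) → ℝ)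
    (hp : ContDiff ℝ (⊤ : ℕ∞) p) (d : ℕ)
    (hom : ∀ t : ℝ, t ≠ 0 → ∀ y, p (dil w t y) = t ^ d * p y)
    (m : Fin n) (hm : d < w m) (x : Fin n → ℝ) :
    fderiv ℝ p x (Pi.single m 1) = 0 := by
  have hpd : Differentiable ℝ p := hp.differentiable (by simp)
  have hq : Continuous fun y => fderiv ℝ p y (Pi.single m 1) := by
    have h1 : Continuous (fun y => fderiv ℝ p y) := hp.continuous_fderiv (by simp)
    exact (ContinuousLinearMap.apply ℝ ℝ (Pi.single m 1)).continuous.comp h1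
  have key : ∀ t : ℝ, t ≠ 0 →
      t ^ (w m - d) * fderiv ℝ p (dil w t x) (Pi.single m 1) = fderiv ℝ p x (Pi.single m 1) := by
    intro t ht
    have hL : HasFDerivAt (fun y => p (dilL w t y))
        ((fderiv ℝ p (dilL w t x)).comp (dilL w t)) x :=
      (hpd (dilL w t x)).hasFDerivAt.comp x (dilL w t).hasFDerivAt
    have heq : (fun y => p (dilL w t y)) = fun y => t ^ d * p y := by
      funext y; rw [dilL_apply, hom t ht y]
    rw [heq] at hL
    have hR : HasFDerivAt (fun y => t ^ d * p y) ((t ^ d) • fderiv ℝ p x) x :=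
      (hpd x).hasFDerivAt.const_mul (t ^ d)
    have hU := hL.unique hR
    have happ := congrArg (fun (L : (Fin n → ℝ) →L[ℝ] ℝ) => L (Pi.single m 1)) hU
    simp only [ContinuousLinearMap.comp_apply, ContinuousLinearMap.smul_apply] at happ
    rw [dilL_single, map_smul] at happ
    rw [dilL_apply] at happ
    have hd : (t:ℝ) ^ d ≠ 0 := pow_ne_zero _ ht
    apply mul_left_cancel₀ hd
    rw [smul_eq_mul, smul_eq_mul] at happ
    rw [← mul_assoc, ← pow_add]
    rw [show d + (w m - d) = w m by omega]
    exact happ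
  have hcont : Continuous fun t : ℝ => fderiv ℝ p (dil w t x) (Pi.single m 1) :=
    hq.comp (continuous_pi fun i => (continuous_pow _).mul continuous_const)
  have h0 := aux_lim17 _ hcont (w m - d) _ key
  rw [zero_pow (by omega : w m - d ≠ 0), zero_mul] at h0
  exact h0

end AuxStmt17

/-- A `w`-homogeneous diffeomorphism intertwining a family of
homogeneous vector fields of degree `-w_j` with `Y_j(0) = e_j` is the identity. -/
theorem homogeneous_intertwiner_is_id
    {n : ℕ} (hn : 0 < n) {w : Fin n → ℕ} (hw : IsWeight w)
    {Y : Fin n → (Fin n → ℝ) → (Fin n → ℝ)}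
    (hYs : ∀ j, ContDiff ℝ (⊤ : ℕ∞) (Y j))
    (hYh : ∀ j, VFHomog w (Y j) (-(w j : ℤ)))
    (hY0 : ∀ j, Y j 0 = Pi.single j 1)
    {φ : (Fin n → ℝ) → (Fin n → ℝ)}
    (hφs : ContDiff ℝ (⊤ : ℕ∞) φ)
    (hφinv : ∃ χ : (Fin n → ℝ) → (Fin n → ℝ), ContDiff ℝ (⊤ : ℕ∞) χ ∧
      Function.LeftInverse χ φ ∧ Function.RightInverse χ φ)
    (hφh : WHomog w φ)
    (hcomm : ∀ x, ∀ j, fderiv ℝ φ x (Y j x) = Y j (φ x)) :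
    φ = id := by
  classical
  have hwpos : ∀ i, w i ≠ 0 := fun i => (hw.pos i).ne'
  have hdil0 : ∀ y : Fin n → ℝ, dil w 0 y = 0 := by
    intro y; funext i; simp [dil, zero_pow (hwpos i)]
  have hdilc : ∀ x : Fin n → ℝ, Continuous fun t : ℝ => dil w t x := by
    intro x; exact continuous_pi fun i => (continuous_pow _).mul continuous_const
  have hφ0 : φ 0 = 0 := by
    have h := hφh 0 0
    rw [hdil0 0, hdil0 (φ 0)] at h
    exact h
  have hzpow : ∀ j k, ∀ t : ℝ, t ≠ 0 → ∀ x,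
      Y j (dil w t x) k = t ^ ((w k : ℤ) - (w j : ℤ)) * Y j x k := by
    intro j k t ht x
    have h1 := hYh j t ht x k
    calc Y j (dil w t x) k
        = t ^ ((w k : ℤ)) * (t ^ (-(w k : ℤ)) * Y j (dil w t x) k) := by
          rw [← mul_assoc, ← zpow_add₀ ht]; simp
      _ = t ^ ((w k : ℤ)) * (t ^ (-(w j : ℤ)) * Y j x k) := by rw [h1]
      _ = t ^ ((w k : ℤ) - (w j : ℤ)) * Y j x k := by
          rw [← mul_assoc, ← zpow_add₀ ht]; ring_nf
  have lemA : ∀ j k, w k ≤ w j → ∀ x, Y j x k = (Pi.single j 1 : Fin n → ℝ) k := by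
    intro j k hkj x
    have key : ∀ t : ℝ, t ≠ 0 → t ^ (w j - w k) * Y j (dil w t x) k = Y j x k := by
      intro t ht
      rw [hzpow j k t ht x, ← mul_assoc, ← zpow_natCast t (w j - w k), ← zpow_add₀ ht]
      rw [show ((w j - w k : ℕ) : ℤ) + ((w k : ℤ) - (w j : ℤ)) = 0 by omega]
      simp
    have hg : Continuous fun t : ℝ => Y j (dil w t x) k :=
      (continuous_apply k).comp ((hYs j).continuous.comp (hdilc x))
    have h0 := aux_lim17 _ hg _ _ key
    rw [hdil0 x, hY0 j] at h0
    rcases eq_or_ne k j with rfl | hne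
    · rw [h0, show w k - w k = 0 by omega, pow_zero, one_mul]
    · rw [h0, Pi.single_eq_of_ne hne, mul_zero]
  have pcont : ∀ j k, ContDiff ℝ (⊤ : ℕ∞) (fun y => Y j y k) := fun j k =>
    (ContinuousLinearMap.proj k : (Fin n → ℝ) →L[ℝ] ℝ).contDiff.comp (hYs j)
  have hφd : Differentiable ℝ φ := hφs.differentiable (by simp)
  have main : ∀ N : ℕ, ∀ k : Fin n, w k = N → ∀ x, φ x k = x k := by
    intro N
    induction N using Nat.strong_induction_on with
    | _ N IH =>
      intro k hk x
      have hgF : ∀ z : Fin n → ℝ, HasFDerivAt (fun y : Fin n → ℝ => φ y k - y k)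
          (((ContinuousLinearMap.proj k).comp (fderiv ℝ φ z)) -
            (ContinuousLinearMap.proj k : (Fin n → ℝ) →L[ℝ] ℝ)) z := by
        intro z
        exact ((ContinuousLinearMap.proj k).hasFDerivAt.comp z (hφd z).hasFDerivAt).sub
          (ContinuousLinearMap.proj k).hasFDerivAt
      have hgl : ∀ z j, fderiv ℝ (fun y : Fin n → ℝ => φ y k - y k) z (Y j z)
          = Y j (φ z) k - Y j z k := by
        intro z j
        rw [(hgF z).fderiv]
        simp only [ContinuousLinearMap.sub_apply, ContinuousLinearMap.comp_apply,
          ContinuousLinearMap.proj_apply]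
        rw [hcomm z j]
      have hzero : ∀ z j, fderiv ℝ (fun y : Fin n → ℝ => φ y k - y k) z (Y j z) = 0 := by
        intro z j
        rw [hgl z j]
        rcases le_or_gt (w k) (w j) with hle | hlt
        · rw [lemA j k hle (φ z), lemA j k hle z, sub_self]
        · have homp : ∀ t : ℝ, t ≠ 0 → ∀ y,
              (fun u => Y j u k) (dil w t y) = t ^ (w k - w j) * (fun u => Y j u k) y := by
            intro t ht y
            simp only []
            rw [hzpow j k t ht y]
            rw [show ((w k : ℤ) - (w j : ℤ)) = ((w k - w j : ℕ) : ℤ) by omega, zpow_natCast]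
          have hB : ∀ m, w k ≤ w m → ∀ u : Fin n → ℝ,
              fderiv ℝ (fun y => Y j y k) u (Pi.single m 1) = 0 := by
            intro m hm u
            exact high_partial_zero17 w _ (pcont j k) (w k - w j) homp m
              (by have := hw.pos j; omega) u
          have hpd : Differentiable ℝ (fun y => Y j y k) := (pcont j k).differentiable (by simp)
          set v : Fin n → ℝ := φ z - z with hvdef
          have hvm : ∀ m, w m < w k → v m = 0 := by
            intro m hm
            have h1 := IH (w m) (by omega) m rfl z
            simp [hvdef, h1]
          have hc : ∀ s : ℝ, HasDerivAt (fun s : ℝ => Y j (z + s • v) k) 0 s := by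
            intro s
            have hline : HasDerivAt (fun s : ℝ => z + s • v) v s := by
              simpa using ((hasDerivAt_id s).smul_const v).const_add z
            have h2 := (hpd (z + s • v)).hasFDerivAt.comp_hasDerivAt s hline
            refine h2.congr_deriv (Eq.symm ?_)
            rw [clm_sum17]
            refine (Finset.sum_eq_zero ?_).symm
            intro m _
            rcases lt_or_ge (w m) (w k) with h1 | h1
            · rw [hvm m h1, zero_mul]
            · rw [hB m h1, mul_zero]
          have hconst := is_const_of_deriv_eq_zero
            (f := fun s : ℝ => Y j (z + s • v) k)
            (fun s => (hc s).differentiableAt) (fun s => (hc s).deriv) 1 0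
          have hps : Y j (φ z) k = Y j z k := by
            have h1 : z + (1:ℝ) • v = φ z := by simp [hvdef]
            have h2 : z + (0:ℝ) • v = z := by simp
            calc Y j (φ z) k = Y j (z + (1:ℝ) • v) k := by rw [h1]
              _ = Y j (z + (0:ℝ) • v) k := hconst
              _ = Y j z k := by rw [h2]
          rw [hps, sub_self]
      have hfz : ∀ z, fderiv ℝ (fun y : Fin n → ℝ => φ y k - y k) z = 0 := by
        intro z
        set ℓ := fderiv ℝ (fun y : Fin n → ℝ => φ y k - y k) z with hldef
        have hsingle : ∀ i : Fin n, ℓ (Pi.single i 1) = 0 := by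
          have H : ∀ d : ℕ, ∀ i : Fin n, n - 1 - i.val ≤ d → ℓ (Pi.single i 1) = 0 := by
            intro d
            induction d with
            | zero =>
              intro i hi
              have h0 := hzero z i
              rw [← hldef, clm_sum17] at h0
              rw [Finset.sum_eq_single i ?_ (by simp)] at h0
              · rw [lemA i i le_rfl z, Pi.single_eq_same, one_mul] at h0
                exact h0
              · intro m _ hmi
                rcases le_or_gt (w m) (w i) with h1 | h1
                · rw [lemA i m h1 z, Pi.single_eq_of_ne hmi, zero_mul]
                · exfalso
                  have him : i.val < m.val := by
                    by_contra hcon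
                    push_neg at hcon
                    exact absurd (hw.mono (Fin.le_def.mpr hcon)) (not_le.mpr h1)
                  have := m.isLt
                  omega
            | succ d IHd =>
              intro i hi
              have h0 := hzero z i
              rw [← hldef, clm_sum17] at h0
              rw [Finset.sum_eq_single i ?_ (by simp)] at h0
              · rw [lemA i i le_rfl z, Pi.single_eq_same, one_mul] at h0
                exact h0
              · intro m _ hmi
                rcases le_or_gt (w m) (w i) with h1 | h1
                · rw [lemA i m h1 z, Pi.single_eq_of_ne hmi, zero_mul]
                · have him : i.val < m.val := by
                    by_contra hcon
                    push_neg at hcon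
                    exact absurd (hw.mono (Fin.le_def.mpr hcon)) (not_le.mpr h1)
                  have hm := m.isLt
                  rw [IHd m (by omega), mul_zero]
          intro i
          exact H n i (by omega)
        refine ContinuousLinearMap.ext fun u => ?_
        rw [clm_sum17]
        simp [hsingle]
      have hgdiff : Differentiable ℝ (fun y : Fin n → ℝ => φ y k - y k) :=
        fun z => (hgF z).differentiableAt
      have hgc := is_const_of_fderiv_eq_zero hgdiff hfz x 0
      have h00 : φ (0 : Fin n → ℝ) k - (0 : Fin n → ℝ) k = 0 := by
        rw [hφ0]; simp
      rw [h00] at hgc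
      linarith [hgc]
  funext x
  funext k
  exact main (w k) k rfl x

end Carnot
end

section
/- For j = 1,…,n let Y_j be a smooth vector field on ℝⁿ which is homogeneous of degree −w_j with respect to the anisotropic dilations and satisfies Y_j(0) = e_j. Given ξ ∈ ℝⁿ, set Y = ξ_1 Y_1 + ⋯ + ξ_n Y_n. Then for every y ∈ ℝⁿ the initial value problem ẋ(t) = Y(x(t)), x(0) = y, has a unique solution defined for all t ∈ ℝ, and there are real coefficients ĉ_{kαβ}, independent of y, ξ and t, such that each component of the solution is the polynomial x_k(t) = y_k + tξ_k + Σ ĉ_{kαβ} y^α (tξ)^β, where the sum runs over pairs of multi-indices (α,β) with ⟨α⟩ + ⟨β⟩ = w_k and |α| + |β| ≥ 2. -/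
open scoped BigOperators
open Filter Topology

namespace Carnot

/-! ### Auxiliary machinery for Statement 18 -/

section FlowAux
open MvPolynomial

variable {n : ℕ} {w : Fin n → ℕ}

lemma mem_mIdx {B : ℕ} {α : Fin n → ℕ} : α ∈ mIdx n B ↔ ∀ i, α i < B := by
  simp [mIdx]

lemma wi_le_wlen (hw : ∀ i, 0 < w i) {α : Fin n → ℕ} {i : Fin n} (hi : α i ≠ 0) :
    w i ≤ wlen w α := by
  calc w i ≤ w i * α i := Nat.le_mul_of_pos_right _ (Nat.pos_of_ne_zero hi)
  _ ≤ wlen w α := Finset.single_le_sum (f := fun j => w j * α j)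
      (fun j _ => Nat.zero_le _) (Finset.mem_univ i)

lemma mem_mIdx_of_wlen (hw : ∀ i, 0 < w i) {α : Fin n → ℕ} {m : ℕ} (h : wlen w α = m) :
    α ∈ mIdx n (m + 1) := by
  rw [mem_mIdx]
  intro i
  have h1 : α i ≤ w i * α i := Nat.le_mul_of_pos_left _ (hw i)
  have h2 : w i * α i ≤ m := h ▸ Finset.single_le_sum (f := fun j => w j * α j)
      (fun j _ => Nat.zero_le _) (Finset.mem_univ i)
  omega

lemma dil_tendsto_zero (hw : ∀ i, 0 < w i) (x : Fin n → ℝ) :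
    Tendsto (fun t : ℝ => dil w t x) (𝓝 0) (𝓝 0) := by
  rw [tendsto_pi_nhds]
  intro i
  have hc : Continuous fun t : ℝ => t ^ (w i) * x i := by continuity
  have h0 : (0:ℝ) ^ (w i) * x i = 0 := by
    rw [zero_pow (hw i).ne', zero_mul]
  simpa [dil, h0] using hc.tendsto 0

lemma vanish_of_neg_homog (hw : ∀ i, 0 < w i) {g : (Fin n → ℝ) → ℝ} (hc : Continuous g)
    {p : ℕ} (hp : 0 < p) (x : Fin n → ℝ)
    (h : ∀ t : ℝ, t ≠ 0 → g x = t ^ p * g (dil w t x)) : g x = 0 := by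
  have h1 : Tendsto (fun t : ℝ => t ^ p * g (dil w t x)) (𝓝[≠] 0) (𝓝 (0 ^ p * g 0)) := by
    refine Tendsto.mono_left ?_ nhdsWithin_le_nhds
    exact ((continuous_pow p).tendsto 0).mul ((hc.tendsto 0).comp (dil_tendsto_zero hw x))
  rw [zero_pow hp.ne', zero_mul] at h1
  have h3 : Tendsto (fun t : ℝ => t ^ p * g (dil w t x)) (𝓝[≠] 0) (𝓝 (g x)) := by
    refine Tendsto.congr' ?_
      (tendsto_const_nhds : Tendsto (fun _ : ℝ => g x) (𝓝[≠] (0:ℝ)) (𝓝 (g x)))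
    filter_upwards [self_mem_nhdsWithin] with t ht
    exact h t ht
  exact tendsto_nhds_unique h3 h1

lemma const_of_homog_zero (hw : ∀ i, 0 < w i) {g : (Fin n → ℝ) → ℝ} (hc : Continuous g)
    (x : Fin n → ℝ) (h : ∀ t : ℝ, t ≠ 0 → g (dil w t x) = g x) : g x = g 0 := by
  have h1 : Tendsto (fun t : ℝ => g (dil w t x)) (𝓝[≠] 0) (𝓝 (g 0)) :=
    Tendsto.mono_left ((hc.tendsto 0).comp (dil_tendsto_zero hw x)) nhdsWithin_le_nhds
  have h3 : Tendsto (fun t : ℝ => g (dil w t x)) (𝓝[≠] 0) (𝓝 (g x)) := by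
    refine Tendsto.congr' ?_
      (tendsto_const_nhds : Tendsto (fun _ : ℝ => g x) (𝓝[≠] (0:ℝ)) (𝓝 (g x)))
    filter_upwards [self_mem_nhdsWithin] with t ht
    exact (h t ht).symm
  exact tendsto_nhds_unique h3 h1

/-! monomial algebra -/

lemma monom_zero_idx (x : Fin n → ℝ) : monom (fun _ => 0) x = 1 := by simp [monom]

lemma monom_smul (α : Fin n → ℕ) (s : ℝ) (x : Fin n → ℝ) :
    monom α (s • x) = s ^ mlen α * monom α x := by
  unfold monom mlen
  rw [← Finset.prod_pow_eq_pow_sum, ← Finset.prod_mul_distrib]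
  exact Finset.prod_congr rfl fun i _ => by simp [mul_pow]

lemma wlen_add (α β : Fin n → ℕ) : wlen w (α + β) = wlen w α + wlen w β := by
  unfold wlen
  rw [← Finset.sum_add_distrib]
  exact Finset.sum_congr rfl fun i _ => by simp [mul_add]

lemma mlen_add (α β : Fin n → ℕ) : mlen (α + β) = mlen α + mlen β := by
  unfold mlen; rw [← Finset.sum_add_distrib]; rfl

lemma wlen_single (i : Fin n) : wlen w (Pi.single i 1) = w i := by
  unfold wlen
  rw [Finset.sum_eq_single i]
  · simp
  · intro j _ hj; rw [Pi.single_eq_of_ne hj]; simp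
  · intro h; exact absurd (Finset.mem_univ i) h

lemma mlen_single (i : Fin n) : mlen (Pi.single i (1:ℕ)) = 1 := by
  unfold mlen
  rw [Finset.sum_eq_single i]
  · simp
  · intro j _ hj; rw [Pi.single_eq_of_ne hj]
  · intro h; exact absurd (Finset.mem_univ i) h

lemma monom_add_single (α : Fin n → ℕ) (i : Fin n) (x : Fin n → ℝ) :
    monom (α + Pi.single i 1) x = x i * monom α x := by
  unfold monom
  have h : ∀ j, x j ^ (α + (Pi.single i 1 : Fin n → ℕ)) j
      = x j ^ (Pi.single i (1:ℕ) : Fin n → ℕ) j * x j ^ α j := by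
    intro j; rw [← pow_add]; congr 1; simp [Pi.add_apply, add_comm]
  rw [Finset.prod_congr rfl (fun j _ => h j), Finset.prod_mul_distrib]
  congr 1
  rw [Finset.prod_eq_single i]
  · simp
  · intro j _ hj; rw [Pi.single_eq_of_ne hj]; simp
  · intro h2; exact absurd (Finset.mem_univ i) h2

/-! first-order derivative tools -/

noncomputable def pderiv1 {n : ℕ} (g : (Fin n → ℝ) → ℝ) (i : Fin n) : (Fin n → ℝ) → ℝ :=
  fun x => fderiv ℝ g x (Pi.single i 1)

noncomputable def dilCLM (w : Fin n → ℕ) (t : ℝ) : (Fin n → ℝ) →L[ℝ] (Fin n → ℝ) :=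
  ContinuousLinearMap.pi fun i => (t ^ w i) • ContinuousLinearMap.proj i

lemma dilCLM_apply (t : ℝ) (x : Fin n → ℝ) : dilCLM w t x = dil w t x := by
  funext i; simp [dilCLM, dil]

lemma dil_single (t : ℝ) (i : Fin n) :
    dil w t (Pi.single i 1) = (t ^ w i) • (Pi.single i (1:ℝ) : Fin n → ℝ) := by
  funext k
  simp only [dil, Pi.smul_apply, smul_eq_mul, Pi.single_apply]
  by_cases h : k = i
  · subst h; simp
  · simp [h]

lemma pderiv1_smooth {g : (Fin n → ℝ) → ℝ} (hg : ContDiff ℝ (⊤ : ℕ∞) g) (i : Fin n) :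
    ContDiff ℝ (⊤ : ℕ∞) (pderiv1 g i) :=
  (hg.fderiv_right (m := (⊤ : ℕ∞)) (by simp)).clm_apply contDiff_const

lemma pderiv1_homog {g : (Fin n → ℝ) → ℝ} (hg : ContDiff ℝ (⊤ : ℕ∞) g) {m : ℕ}
    (hh : ∀ t : ℝ, t ≠ 0 → ∀ x, g (dil w t x) = t ^ m * g x) (i : Fin n) :
    ∀ t : ℝ, t ≠ 0 → ∀ x,
      t ^ w i * pderiv1 g i (dil w t x) = t ^ m * pderiv1 g i x := by
  intro t ht x
  have hgd := hg.differentiable (by simp)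
  have h1 : HasFDerivAt (fun y => g (dil w t y))
      ((fderiv ℝ g (dil w t x)).comp (dilCLM w t)) x := by
    have h := (hgd (dil w t x)).hasFDerivAt.comp x ((dilCLM w t).hasFDerivAt (x := x))
    have : (fun y => g (dilCLM w t y)) = fun y => g (dil w t y) := by
      funext y; rw [dilCLM_apply]
    rw [← this]
    simpa [Function.comp_def, dilCLM_apply] using h
  have h2 : HasFDerivAt (fun y => t ^ m * g y) ((t ^ m) • fderiv ℝ g x) x :=
    (hgd x).hasFDerivAt.const_mul (t ^ m)
  have heq : (fun y => g (dil w t y)) = fun y => t ^ m * g y := funext fun y => hh t ht y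
  rw [heq] at h1
  have huniq := h1.unique h2
  have happ : ((fderiv ℝ g (dil w t x)).comp (dilCLM w t)) (Pi.single i 1)
      = ((t ^ m) • fderiv ℝ g x) (Pi.single i 1) := by rw [huniq]
  rw [ContinuousLinearMap.comp_apply] at happ
  rw [show dilCLM w t (Pi.single i 1) = (t ^ w i) • (Pi.single i (1:ℝ) : Fin n → ℝ) from
    (dilCLM_apply t _).trans (dil_single t i)] at happ
  rw [map_smul] at happ
  simpa [pderiv1, smul_eq_mul] using happ

/-! the structure theorem for smooth homogeneous functions -/

theorem homog_poly (hw : ∀ i, 0 < w i) (m : ℕ) :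
    ∀ g : (Fin n → ℝ) → ℝ, ContDiff ℝ (⊤ : ℕ∞) g →
    (∀ t : ℝ, t ≠ 0 → ∀ x, g (dil w t x) = t ^ m * g x) →
    ∃ a : (Fin n → ℕ) → ℝ, ∀ x, g x =
      ∑ α ∈ (mIdx n (m+1)).filter (fun α => wlen w α = m), a α * monom α x := by
  induction m using Nat.strong_induction_on with
  | _ m IH =>
  intro g hg hh
  rcases Nat.eq_zero_or_pos m with hm | hm
  · subst hm
    have hfil : (mIdx n 1).filter (fun α => wlen w α = 0) = {fun _ => 0} := by
      ext α
      simp only [Finset.mem_filter, Finset.mem_singleton, mem_mIdx]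
      constructor
      · rintro ⟨h1, _⟩; funext i; have := h1 i; omega
      · rintro rfl
        refine ⟨fun i => by simp, ?_⟩
        unfold wlen; simp
    refine ⟨fun _ => g 0, fun x => ?_⟩
    rw [hfil, Finset.sum_singleton, monom_zero_idx, mul_one]
    exact const_of_homog_zero hw hg.continuous x fun t ht => by simpa using hh t ht x
  · -- m > 0
    have hgd := hg.differentiable (by simp)
    have hg0 : g 0 = 0 := by
      have hd0 : dil w 2 (0 : Fin n → ℝ) = 0 := by funext i; simp [dil]
      have h := hh 2 two_ne_zero 0
      rw [hd0] at h
      have h2 : (1:ℝ) < 2 ^ m := one_lt_pow₀ (by norm_num) (by omega)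
      nlinarith [h, h2]
    -- classification of partial derivatives
    have key := fun i => pderiv1_homog hg hh i
    have hzero : ∀ i, m < w i → ∀ x, pderiv1 g i x = 0 := by
      intro i hi x
      apply vanish_of_neg_homog hw (pderiv1_smooth hg i).continuous
        (p := w i - m) (by omega) x
      intro t ht
      have h := key i t ht x
      have h2 : t ^ m * (t ^ (w i - m) * pderiv1 g i (dil w t x)) = t ^ m * pderiv1 g i x := by
        rw [← mul_assoc, ← pow_add, show m + (w i - m) = w i by omega]
        exact h
      exact (mul_left_cancel₀ (pow_ne_zero m ht) h2).symm
    have hrep : ∀ i : Fin n, ∃ b : (Fin n → ℕ) → ℝ, ∀ x, pderiv1 g i x =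
        ∑ α ∈ (mIdx n ((m - w i)+1)).filter (fun α => wlen w α = m - w i),
          b α * monom α x := by
      intro i
      by_cases hi : w i ≤ m
      · refine IH (m - w i) (by have := hw i; omega) (pderiv1 g i) (pderiv1_smooth hg i) ?_
        intro t ht x
        have h := key i t ht x
        have h2 : t ^ w i * (t ^ (m - w i) * pderiv1 g i x)
            = t ^ w i * pderiv1 g i (dil w t x) := by
          rw [← mul_assoc, ← pow_add, show w i + (m - w i) = m by omega]
          exact h.symm
        exact (mul_left_cancel₀ (pow_ne_zero (w i) ht) h2).symm
      · exact ⟨0, fun x => by simp [hzero i (by omega) x]⟩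
    choose b hb using hrep
    -- integral reconstruction
    have hderiv : ∀ x : Fin n → ℝ, ∀ s : ℝ,
        HasDerivAt (fun s : ℝ => g (s • x)) ((fderiv ℝ g (s • x)) x) s := by
      intro x s
      have h1 : HasDerivAt (fun s : ℝ => s • x) x s := by
        simpa using (hasDerivAt_id s).smul_const x
      have h2 := (hgd (s • x)).hasFDerivAt.comp_hasDerivAt s h1
      simpa [Function.comp_def] using h2
    have hcontf : Continuous (fderiv ℝ g) := (hg.fderiv_right (m := (⊤ : ℕ∞)) (by simp)).continuous
    have hcont : ∀ x : Fin n → ℝ, Continuous fun s : ℝ => (fderiv ℝ g (s • x)) x := by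
      intro x
      exact (ContinuousLinearMap.apply ℝ ℝ x).continuous.comp
        (hcontf.comp (continuous_id.smul continuous_const))
    have hexp : ∀ x : Fin n → ℝ, ∀ s : ℝ,
        (fderiv ℝ g (s • x)) x = ∑ i, x i * pderiv1 g i (s • x) := by
      intro x s
      have hxs : (fderiv ℝ g (s • x)) x = (fderiv ℝ g (s • x)) (∑ i, Pi.single i (x i)) := by
        rw [Finset.univ_sum_single]
      rw [hxs, map_sum]
      refine Finset.sum_congr rfl fun i _ => ?_
      have hsx : Pi.single i (x i) = (x i) • (Pi.single i (1:ℝ) : Fin n → ℝ) := by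
        funext k
        simp only [Pi.smul_apply, smul_eq_mul, Pi.single_apply, mul_ite, mul_one, mul_zero]
      rw [hsx, map_smul, smul_eq_mul, pderiv1]
    have hint : ∀ x : Fin n → ℝ, g x = ∑ i, x i * ∫ s in (0:ℝ)..1, pderiv1 g i (s • x) := by
      intro x
      have hFTC : (∫ s in (0:ℝ)..1, (∑ i, x i * pderiv1 g i (s • x)))
          = g ((1:ℝ) • x) - g ((0:ℝ) • x) := by
        have hcint : Continuous fun s : ℝ => ∑ i, x i * pderiv1 g i (s • x) := by
          refine continuous_finset_sum _ fun i _ => continuous_const.mul ?_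
          exact (pderiv1_smooth hg i).continuous.comp (continuous_id.smul continuous_const)
        exact intervalIntegral.integral_eq_sub_of_hasDerivAt
          (fun s _ => by have h := hderiv x s; rwa [hexp x s] at h)
          (hcint.intervalIntegrable 0 1)
      rw [one_smul, zero_smul, hg0, sub_zero] at hFTC
      rw [← hFTC]
      rw [intervalIntegral.integral_finset_sum
        (f := fun (i : Fin n) (s : ℝ) => x i * pderiv1 g i (s • x)) (fun i _ => by
          refine Continuous.intervalIntegrable ?_ 0 1
          exact continuous_const.mul
            ((pderiv1_smooth hg i).continuous.comp (continuous_id.smul continuous_const)))]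
      exact Finset.sum_congr rfl fun i _ => intervalIntegral.integral_const_mul _ _
    -- evaluate the integrals
    have hival : ∀ i : Fin n, ∀ x : Fin n → ℝ,
        (∫ s in (0:ℝ)..1, pderiv1 g i (s • x)) =
        ∑ α ∈ (mIdx n ((m - w i)+1)).filter (fun α => wlen w α = m - w i),
          (b i α / (mlen α + 1)) * monom α x := by
      intro i x
      have hfe : (fun s : ℝ => pderiv1 g i (s • x)) = fun s : ℝ =>
        ∑ α ∈ (mIdx n ((m - w i)+1)).filter (fun α => wlen w α = m - w i),
          (b i α * monom α x) * s ^ mlen α := by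
        funext s
        rw [hb i (s • x)]
        exact Finset.sum_congr rfl fun α _ => by rw [monom_smul]; ring
      rw [hfe]
      rw [intervalIntegral.integral_finset_sum
        (f := fun α (s : ℝ) => (b i α * monom α x) * s ^ mlen α) (fun α _ =>
        ((continuous_const.mul (continuous_pow _)).intervalIntegrable 0 1))]
      refine Finset.sum_congr rfl fun α _ => ?_
      rw [intervalIntegral.integral_const_mul, integral_pow]
      have : ((mlen α : ℝ) + 1) ≠ 0 := by positivity
      field_simp
      simp
    -- reassemble
    classical
    refine ⟨fun β => ∑ i ∈ Finset.univ.filter (fun i => w i ≤ m),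
      (if 1 ≤ β i then b i (β - Pi.single i 1) / (mlen (β - Pi.single i 1) + 1) else 0),
      fun x => ?_⟩
    have hmain : ∀ i ∈ Finset.univ.filter (fun i => w i ≤ m),
        x i * (∫ s in (0:ℝ)..1, pderiv1 g i (s • x)) =
        ∑ β ∈ (mIdx n (m+1)).filter (fun β => wlen w β = m),
          (if 1 ≤ β i then b i (β - Pi.single i 1) / (mlen (β - Pi.single i 1) + 1) else 0)
            * monom β x := by
      intro i hi
      simp only [Finset.mem_filter, Finset.mem_univ, true_and] at hi
      rw [hival i x, Finset.mul_sum]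
      have step1 : ∀ α ∈ (mIdx n ((m - w i)+1)).filter (fun α => wlen w α = m - w i),
          x i * (b i α / (mlen α + 1) * monom α x) =
          (b i ((α + Pi.single i 1) - Pi.single i 1) /
            (mlen ((α + Pi.single i 1) - Pi.single i 1) + 1)) *
            monom (α + Pi.single i 1) x := by
        intro α _
        have hc : (α + Pi.single i 1) - Pi.single i 1 = α := by
          funext j; simp [Pi.sub_apply, Pi.add_apply]
        rw [hc, monom_add_single]; ring
      rw [Finset.sum_congr rfl step1]
      have hbij : ∑ α ∈ (mIdx n ((m - w i)+1)).filter (fun α => wlen w α = m - w i),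
          (b i ((α + Pi.single i 1) - Pi.single i 1) /
            (mlen ((α + Pi.single i 1) - Pi.single i 1) + 1)) * monom (α + Pi.single i 1) x =
          ∑ β ∈ ((mIdx n (m+1)).filter (fun β => wlen w β = m)).filter (fun β => 1 ≤ β i),
          (b i (β - Pi.single i 1) / (mlen (β - Pi.single i 1) + 1)) * monom β x := by
        refine Finset.sum_nbij' (fun α => α + Pi.single i 1) (fun β => β - Pi.single i 1)
          ?_ ?_ ?_ ?_ ?_
        · intro α hα
          simp only [Finset.mem_filter] at hα ⊢
          have hwl : wlen w (α + Pi.single i 1) = m := by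
            rw [wlen_add, wlen_single, hα.2]; omega
          refine ⟨⟨mem_mIdx_of_wlen hw hwl, hwl⟩, ?_⟩
          simp [Pi.add_apply]
        · intro β hβ
          simp only [Finset.mem_filter] at hβ ⊢
          obtain ⟨⟨_, hwl⟩, hβi⟩ := hβ
          have hrec : (β - Pi.single i 1) + Pi.single i 1 = β := by
            funext j
            by_cases hj : j = i
            · subst hj
              simp only [Pi.add_apply, Pi.sub_apply, Pi.single_eq_same]
              omega
            · simp [Pi.add_apply, Pi.sub_apply, Pi.single_eq_of_ne hj]
          have hwl2 : wlen w (β - Pi.single i 1) = m - w i := by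
            have := wlen_add (w := w) (β - Pi.single i 1) (Pi.single i 1)
            rw [hrec, wlen_single, hwl] at this
            omega
          exact ⟨mem_mIdx_of_wlen hw hwl2, hwl2⟩
        · intro α _
          funext j; simp [Pi.sub_apply, Pi.add_apply]
        · intro β hβ
          simp only [Finset.mem_filter] at hβ
          funext j
          by_cases hj : j = i
          · subst hj
            simp only [Pi.add_apply, Pi.sub_apply, Pi.single_eq_same]
            have := hβ.2
            omega
          · simp [Pi.add_apply, Pi.sub_apply, Pi.single_eq_of_ne hj]
        · intro α _; rfl
      rw [hbij, Finset.sum_filter]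
      refine Finset.sum_congr rfl fun β _ => ?_
      split_ifs with h
      · rfl
      · rw [zero_mul]
    calc g x = ∑ i, x i * ∫ s in (0:ℝ)..1, pderiv1 g i (s • x) := hint x
      _ = (∑ i ∈ Finset.univ.filter (fun i => w i ≤ m),
            x i * ∫ s in (0:ℝ)..1, pderiv1 g i (s • x))
          + ∑ i ∈ Finset.univ.filter (fun i => ¬ w i ≤ m),
            x i * ∫ s in (0:ℝ)..1, pderiv1 g i (s • x) :=
        (Finset.sum_filter_add_sum_filter_not _ _ _).symm
      _ = ∑ i ∈ Finset.univ.filter (fun i => w i ≤ m),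
            x i * ∫ s in (0:ℝ)..1, pderiv1 g i (s • x) := by
        have hz2 : ∀ i ∈ Finset.univ.filter (fun i => ¬ w i ≤ m),
            x i * (∫ s in (0:ℝ)..1, pderiv1 g i (s • x)) = 0 := by
          intro i hi
          simp only [Finset.mem_filter] at hi
          have hzz : (fun s : ℝ => pderiv1 g i (s • x)) = fun _ => (0:ℝ) := by
            funext s; exact hzero i (by omega) (s • x)
          rw [hzz]
          simp
        rw [Finset.sum_eq_zero hz2, add_zero]
      _ = ∑ i ∈ Finset.univ.filter (fun i => w i ≤ m),
          ∑ β ∈ (mIdx n (m+1)).filter (fun β => wlen w β = m),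
          (if 1 ≤ β i then b i (β - Pi.single i 1) / (mlen (β - Pi.single i 1) + 1) else 0)
            * monom β x := Finset.sum_congr rfl hmain
      _ = ∑ β ∈ (mIdx n (m+1)).filter (fun β => wlen w β = m),
          ∑ i ∈ Finset.univ.filter (fun i => w i ≤ m),
          (if 1 ≤ β i then b i (β - Pi.single i 1) / (mlen (β - Pi.single i 1) + 1) else 0)
            * monom β x := Finset.sum_comm
      _ = _ := Finset.sum_congr rfl fun β _ => (Finset.sum_mul _ _ _).symm

/-- evaluation of a polynomial in variables `(Y_i, Z_i)` at `Y = y`, `Z = t ξ`. -/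
noncomputable def EV (t : ℝ) (y ξ : Fin n → ℝ) (P : MvPolynomial (Fin n ⊕ Fin n) ℝ) : ℝ :=
  eval (Sum.elim y fun i => t * ξ i) P

/-- `Z`-degree of an exponent vector. -/
def dZ (d : (Fin n ⊕ Fin n) →₀ ℕ) : ℕ := ∑ i : Fin n, d (Sum.inr i)
/-- total degree of an exponent vector. -/
def TD (d : (Fin n ⊕ Fin n) →₀ ℕ) : ℕ := ∑ v : Fin n ⊕ Fin n, d v
/-- weighted degree of an exponent vector. -/
def WD (w : Fin n → ℕ) (d : (Fin n ⊕ Fin n) →₀ ℕ) : ℕ :=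
  ∑ v : Fin n ⊕ Fin n, (Sum.elim w w v) * d v

/-- formal integration: multiply by `Z_j` and divide by the new `Z`-degree. -/
noncomputable def Jop (j : Fin n) (P : MvPolynomial (Fin n ⊕ Fin n) ℝ) :
    MvPolynomial (Fin n ⊕ Fin n) ℝ :=
  ∑ d ∈ P.support, monomial (d + Finsupp.single (Sum.inr j) 1) (coeff d P / (dZ d + 1))

lemma dZ_add (d e : (Fin n ⊕ Fin n) →₀ ℕ) : dZ (d + e) = dZ d + dZ e := by
  unfold dZ; rw [← Finset.sum_add_distrib]; simp

lemma TD_add (d e : (Fin n ⊕ Fin n) →₀ ℕ) : TD (d + e) = TD d + TD e := by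
  unfold TD; rw [← Finset.sum_add_distrib]; simp

lemma WD_add (d e : (Fin n ⊕ Fin n) →₀ ℕ) : WD w (d + e) = WD w d + WD w e := by
  unfold WD; rw [← Finset.sum_add_distrib]
  exact Finset.sum_congr rfl fun v _ => by simp [mul_add]

lemma dZ_single_inr (j : Fin n) : dZ (Finsupp.single (Sum.inr j) (1:ℕ)) = 1 := by
  unfold dZ
  rw [Finset.sum_eq_single j]
  · simp
  · intro b _ hb; simp [Finsupp.single_apply, Ne.symm hb]
  · intro h; exact absurd (Finset.mem_univ j) h

lemma WD_single_inr (j : Fin n) : WD w (Finsupp.single (Sum.inr j) (1:ℕ)) = w j := by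
  unfold WD
  rw [Fintype.sum_sum_type]
  have h1 : ∑ a : Fin n, Sum.elim w w (Sum.inl a) *
      (Finsupp.single (Sum.inr j) (1:ℕ) : (Fin n ⊕ Fin n) →₀ ℕ) (Sum.inl a) = 0 := by
    refine Finset.sum_eq_zero fun a _ => ?_
    simp [Finsupp.single_apply]
  have h2 : ∑ a : Fin n, Sum.elim w w (Sum.inr a) *
      (Finsupp.single (Sum.inr j) (1:ℕ) : (Fin n ⊕ Fin n) →₀ ℕ) (Sum.inr a) = w j := by
    rw [Finset.sum_eq_single j]
    · simp
    · intro b _ hb; simp [Finsupp.single_apply, Ne.symm hb]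
    · intro h; exact absurd (Finset.mem_univ j) h
  rw [h1, h2, zero_add]

lemma WD_single_inl (k : Fin n) : WD w (Finsupp.single (Sum.inl k) (1:ℕ)) = w k := by
  unfold WD
  rw [Fintype.sum_sum_type]
  have h1 : ∑ a : Fin n, Sum.elim w w (Sum.inr a) *
      (Finsupp.single (Sum.inl k) (1:ℕ) : (Fin n ⊕ Fin n) →₀ ℕ) (Sum.inr a) = 0 := by
    refine Finset.sum_eq_zero fun a _ => ?_
    simp [Finsupp.single_apply]
  have h2 : ∑ a : Fin n, Sum.elim w w (Sum.inl a) *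
      (Finsupp.single (Sum.inl k) (1:ℕ) : (Fin n ⊕ Fin n) →₀ ℕ) (Sum.inl a) = w k := by
    rw [Finset.sum_eq_single k]
    · simp
    · intro b _ hb; simp [Finsupp.single_apply, Ne.symm hb]
    · intro h; exact absurd (Finset.mem_univ k) h
  rw [h1, h2, add_zero]

lemma WD_zero_d : WD w (0 : (Fin n ⊕ Fin n) →₀ ℕ) = 0 := by unfold WD; simp

lemma TD_eq_zero_iff (d : (Fin n ⊕ Fin n) →₀ ℕ) : TD d = 0 ↔ d = 0 := by
  unfold TD
  rw [Finset.sum_eq_zero_iff]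
  constructor
  · intro h; ext v; exact h v (Finset.mem_univ v)
  · intro h v _; simp [h]

/-- split of the evaluation monomial. -/
lemma evalM (t : ℝ) (y ξ : Fin n → ℝ) (d : (Fin n ⊕ Fin n) →₀ ℕ) :
    (∏ v : Fin n ⊕ Fin n, (Sum.elim y fun i => t * ξ i) v ^ d v)
      = (∏ i, y i ^ d (Sum.inl i)) * ((∏ i, ξ i ^ d (Sum.inr i)) * t ^ dZ d) := by
  rw [Fintype.prod_sum_type]
  congr 1
  unfold dZ
  rw [← Finset.prod_pow_eq_pow_sum, ← Finset.prod_mul_distrib]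
  exact Finset.prod_congr rfl fun i _ => by simp [mul_pow, mul_comm]

lemma EV_monomial (t : ℝ) (y ξ : Fin n → ℝ) (d : (Fin n ⊕ Fin n) →₀ ℕ) (c : ℝ) :
    EV t y ξ (monomial d c)
      = c * ((∏ i, y i ^ d (Sum.inl i)) * ((∏ i, ξ i ^ d (Sum.inr i)) * t ^ dZ d)) := by
  unfold EV
  rw [eval_monomial, Finsupp.prod_fintype _ _ (fun v => pow_zero _), evalM]

lemma EV_eq (t : ℝ) (y ξ : Fin n → ℝ) (P : MvPolynomial (Fin n ⊕ Fin n) ℝ) :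
    EV t y ξ P = ∑ d ∈ P.support, coeff d P *
      ((∏ i, y i ^ d (Sum.inl i)) * ((∏ i, ξ i ^ d (Sum.inr i)) * t ^ dZ d)) := by
  unfold EV
  rw [eval_eq']
  exact Finset.sum_congr rfl fun d _ => by rw [evalM]

lemma prod_xi_add_single (ξ : Fin n → ℝ) (d : (Fin n ⊕ Fin n) →₀ ℕ) (j : Fin n) :
    (∏ i, ξ i ^ (((d + Finsupp.single (Sum.inr j) 1) : (Fin n ⊕ Fin n) →₀ ℕ) (Sum.inr i)))
      = ξ j * ∏ i, ξ i ^ d (Sum.inr i) := by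
  have h : ∀ i : Fin n, ξ i ^ (((d + Finsupp.single (Sum.inr j) 1) : (Fin n ⊕ Fin n) →₀ ℕ) (Sum.inr i))
      = ξ i ^ ((Finsupp.single (Sum.inr j) (1:ℕ) : (Fin n ⊕ Fin n) →₀ ℕ) (Sum.inr i)) * ξ i ^ d (Sum.inr i) := by
    intro i
    rw [Finsupp.add_apply, ← pow_add, add_comm]
  rw [Finset.prod_congr rfl fun i _ => h i, Finset.prod_mul_distrib]
  congr 1
  rw [Finset.prod_eq_single j]
  · simp
  · intro i _ hij
    rw [Finsupp.single_apply, if_neg (by simpa using (Ne.symm hij)), pow_zero]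
  · intro h2; exact absurd (Finset.mem_univ j) h2

lemma prod_y_add_single (y : Fin n → ℝ) (d : (Fin n ⊕ Fin n) →₀ ℕ) (j : Fin n) :
    (∏ i, y i ^ (((d + Finsupp.single (Sum.inr j) 1) : (Fin n ⊕ Fin n) →₀ ℕ) (Sum.inl i)))
      = ∏ i, y i ^ d (Sum.inl i) := by
  refine Finset.prod_congr rfl fun i _ => ?_
  rw [Finsupp.add_apply, Finsupp.single_apply, if_neg (by simp), add_zero]

lemma hasDerivAt_EV_Jop (y ξ : Fin n → ℝ) (j : Fin n)
    (P : MvPolynomial (Fin n ⊕ Fin n) ℝ) (t : ℝ) :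
    HasDerivAt (fun t => EV t y ξ (Jop j P)) (ξ j * EV t y ξ P) t := by
  have hfun : ∀ s : ℝ, EV s y ξ (Jop j P) = ∑ d ∈ P.support,
      (coeff d P / (dZ d + 1)) * ((∏ i, y i ^ d (Sum.inl i)) *
        ((ξ j * ∏ i, ξ i ^ d (Sum.inr i)) * s ^ (dZ d + 1))) := by
    intro s
    unfold Jop EV
    rw [map_sum]
    refine Finset.sum_congr rfl fun d _ => ?_
    rw [show eval (Sum.elim y fun i => s * ξ i)
        ((monomial (d + Finsupp.single (Sum.inr j) 1)) (coeff d P / (↑(dZ d) + 1)))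
      = EV s y ξ ((monomial (d + Finsupp.single (Sum.inr j) 1)) (coeff d P / (↑(dZ d) + 1)))
      from rfl]
    rw [EV_monomial, prod_xi_add_single, prod_y_add_single, dZ_add, dZ_single_inr]
  have hd : HasDerivAt (fun s => EV s y ξ (Jop j P))
      (∑ d ∈ P.support, (coeff d P / (dZ d + 1)) * ((∏ i, y i ^ d (Sum.inl i)) *
        ((ξ j * ∏ i, ξ i ^ d (Sum.inr i)) * ((dZ d + 1) * t ^ dZ d)))) t := by
    have : ∀ s : ℝ, (fun s => EV s y ξ (Jop j P)) s = ∑ d ∈ P.support,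
        (coeff d P / (dZ d + 1)) * ((∏ i, y i ^ d (Sum.inl i)) *
          ((ξ j * ∏ i, ξ i ^ d (Sum.inr i)) * s ^ (dZ d + 1))) := hfun
    rw [funext this]
    refine HasDerivAt.fun_sum fun d _ => ?_
    have hp : HasDerivAt (fun s : ℝ => s ^ (dZ d + 1))
        ((dZ d + 1 : ℕ) * t ^ dZ d) t := by simpa using hasDerivAt_pow (dZ d + 1) t
    have := (hp.const_mul ((coeff d P / (dZ d + 1)) *
      ((∏ i, y i ^ d (Sum.inl i)) * (ξ j * ∏ i, ξ i ^ d (Sum.inr i)))))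
    refine (this.congr_deriv (by push_cast; ring)).congr_of_eventuallyEq
      (Filter.Eventually.of_forall fun s => by push_cast; ring)
  convert hd using 1
  rw [EV_eq, Finset.mul_sum]
  refine Finset.sum_congr rfl fun d _ => ?_
  have hne : ((dZ d : ℝ) + 1) ≠ 0 := by positivity
  field_simp

lemma EV_zero_Jop (y ξ : Fin n → ℝ) (j : Fin n) (P : MvPolynomial (Fin n ⊕ Fin n) ℝ) :
    EV 0 y ξ (Jop j P) = 0 := by
  unfold Jop EV
  rw [map_sum]
  refine Finset.sum_eq_zero fun d _ => ?_
  rw [show eval (Sum.elim y fun i => (0:ℝ) * ξ i)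
      ((monomial (d + Finsupp.single (Sum.inr j) 1)) (coeff d P / (↑(dZ d) + 1)))
    = EV 0 y ξ ((monomial (d + Finsupp.single (Sum.inr j) 1)) (coeff d P / (↑(dZ d) + 1)))
    from rfl]
  rw [EV_monomial, dZ_add, dZ_single_inr]
  rw [zero_pow (by omega)]
  ring

lemma Jop_support (j : Fin n) (P : MvPolynomial (Fin n ⊕ Fin n) ℝ) :
    (Jop j P).support ⊆ P.support.image (· + Finsupp.single (Sum.inr j) 1) := by
  unfold Jop
  intro e he
  have h1 := MvPolynomial.support_sum (s := P.support)
    (f := fun d => monomial (d + Finsupp.single (Sum.inr j) 1) (coeff d P / (dZ d + 1))) he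
  rw [Finset.mem_biUnion] at h1
  obtain ⟨d, hd, he2⟩ := h1
  have h2 := support_monomial_subset he2
  rw [Finset.mem_singleton] at h2
  exact Finset.mem_image.mpr ⟨d, hd, h2.symm⟩

/-- weighted homogeneity bookkeeping via supports. -/
def Hom (w : Fin n → ℕ) (m : ℕ) (P : MvPolynomial (Fin n ⊕ Fin n) ℝ) : Prop :=
  ∀ d ∈ P.support, WD w d = m

def Deg2 (P : MvPolynomial (Fin n ⊕ Fin n) ℝ) : Prop := ∀ d ∈ P.support, 2 ≤ TD d

lemma Hom_add {m : ℕ} {P Q : MvPolynomial (Fin n ⊕ Fin n) ℝ} (hP : Hom w m P)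
    (hQ : Hom w m Q) : Hom w m (P + Q) := by
  intro d hd
  rcases Finset.mem_union.mp (MvPolynomial.support_add hd) with h | h
  exacts [hP d h, hQ d h]

lemma Hom_monomial (d : (Fin n ⊕ Fin n) →₀ ℕ) (c : ℝ) : Hom w (WD w d) (monomial d c) := by
  intro e he
  have := support_monomial_subset he
  rw [Finset.mem_singleton] at this
  rw [this]

lemma Hom_C (c : ℝ) : Hom w 0 (C c : MvPolynomial (Fin n ⊕ Fin n) ℝ) := by
  intro e he
  rw [show (C c : MvPolynomial (Fin n ⊕ Fin n) ℝ) = monomial 0 c from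
    (congrFun monomial_zero' c).symm] at he
  have h2 := support_monomial_subset he
  rw [Finset.mem_singleton] at h2
  rw [h2, WD_zero_d]

lemma Hom_mul {m m' : ℕ} {P Q : MvPolynomial (Fin n ⊕ Fin n) ℝ} (hP : Hom w m P)
    (hQ : Hom w m' Q) : Hom w (m + m') (P * Q) := by
  intro d hd
  have h := MvPolynomial.support_mul P Q hd
  rw [Finset.mem_add] at h
  obtain ⟨a, ha, b, hb, hab⟩ := h
  rw [← hab, WD_add, hP a ha, hQ b hb]

lemma Hom_sum {ι : Type*} {m : ℕ} {s : Finset ι} {f : ι → MvPolynomial (Fin n ⊕ Fin n) ℝ}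
    (h : ∀ α ∈ s, Hom w m (f α)) : Hom w m (∑ α ∈ s, f α) := by
  intro d hd
  have h1 := MvPolynomial.support_sum (s := s) (f := f) hd
  rw [Finset.mem_biUnion] at h1
  obtain ⟨α, hα, hd2⟩ := h1
  exact h α hα d hd2

lemma Hom_pow {m : ℕ} {P : MvPolynomial (Fin n ⊕ Fin n) ℝ} (hP : Hom w m P) (k : ℕ) :
    Hom w (m * k) (P ^ k) := by
  induction k with
  | zero => simpa [pow_zero] using Hom_C (w := w) 1
  | succ k IH =>
    rw [pow_succ, Nat.mul_succ]
    exact Hom_mul IH hP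

lemma Hom_prod {s : Finset (Fin n)} {m : Fin n → ℕ}
    {f : Fin n → MvPolynomial (Fin n ⊕ Fin n) ℝ}
    (h : ∀ i ∈ s, Hom w (m i) (f i)) : Hom w (∑ i ∈ s, m i) (∏ i ∈ s, f i) := by
  classical
  induction s using Finset.induction_on with
  | empty => simpa using Hom_C (w := w) 1
  | insert a s' hx IH =>
    rw [Finset.sum_insert hx, Finset.prod_insert hx]
    exact Hom_mul (h a (Finset.mem_insert_self a s'))
      (IH fun i hi => h i (Finset.mem_insert_of_mem hi))

lemma Hom_coeff_zero {m : ℕ} (hm : 0 < m) {P : MvPolynomial (Fin n ⊕ Fin n) ℝ}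
    (hP : Hom w m P) : coeff 0 P = 0 := by
  by_contra h
  have h0 : (0 : (Fin n ⊕ Fin n) →₀ ℕ) ∈ P.support := by
    rwa [MvPolynomial.mem_support_iff]
  have := hP 0 h0
  rw [WD_zero_d] at this
  omega

lemma Hom_Jop {m : ℕ} {P : MvPolynomial (Fin n ⊕ Fin n) ℝ} (hP : Hom w m P) (j : Fin n) :
    Hom w (m + w j) (Jop j P) := by
  intro e he
  obtain ⟨d, hd, rfl⟩ := Finset.mem_image.mp (Jop_support j P he)
  rw [WD_add, hP d hd, WD_single_inr]

lemma Deg2_Jop {P : MvPolynomial (Fin n ⊕ Fin n) ℝ} (h0 : constantCoeff P = 0) (j : Fin n) :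
    Deg2 (Jop j P) := by
  intro e he
  obtain ⟨d, hd, rfl⟩ := Finset.mem_image.mp (Jop_support j P he)
  rw [TD_add]
  have h1 : TD (Finsupp.single (Sum.inr j) (1:ℕ)) = 1 := by
    unfold TD
    rw [Finset.sum_eq_single (Sum.inr j)]
    · simp
    · intro b _ hb; simp [Finsupp.single_apply, Ne.symm hb]
    · intro h; exact absurd (Finset.mem_univ _) h
  have h2 : d ≠ 0 := by
    rintro rfl
    rw [MvPolynomial.mem_support_iff] at hd
    exact hd (by simpa [MvPolynomial.constantCoeff_eq] using h0)
  have h3 : 1 ≤ TD d := by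
    rcases Nat.eq_zero_or_pos (TD d) with h | h
    · exact absurd ((TD_eq_zero_iff d).mp h) h2
    · omega
  omega


lemma Deg2_sum {ι : Type*} {s : Finset ι} {f : ι → MvPolynomial (Fin n ⊕ Fin n) ℝ}
    (h : ∀ j ∈ s, Deg2 (f j)) : Deg2 (∑ j ∈ s, f j) := by
  intro d hd
  have h1 := MvPolynomial.support_sum (s := s) (f := f) hd
  rw [Finset.mem_biUnion] at h1
  obtain ⟨j, hj, hd2⟩ := h1
  exact h j hj d hd2

lemma dZ_single_inl (k : Fin n) : dZ (Finsupp.single (Sum.inl k) (1:ℕ)) = 0 := by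
  unfold dZ
  refine Finset.sum_eq_zero fun i _ => ?_
  rw [Finsupp.single_apply, if_neg (by simp)]

lemma EV_monomial_inl (t : ℝ) (y ξ : Fin n → ℝ) (k : Fin n) :
    EV t y ξ (MvPolynomial.monomial (Finsupp.single (Sum.inl k) 1) (1:ℝ)) = y k := by
  rw [EV_monomial]
  have h1 : (∏ i, y i ^ ((Finsupp.single (Sum.inl k) (1:ℕ) :
      (Fin n ⊕ Fin n) →₀ ℕ)) (Sum.inl i)) = y k := by
    rw [Finset.prod_eq_single k]
    · simp
    · intro b _ hb
      rw [Finsupp.single_apply, if_neg (by simp [Ne.symm hb]), pow_zero]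
    · intro h; exact absurd (Finset.mem_univ k) h
  have h2 : (∏ i, ξ i ^ ((Finsupp.single (Sum.inl k) (1:ℕ) :
      (Fin n ⊕ Fin n) →₀ ℕ)) (Sum.inr i)) = 1 := by
    refine Finset.prod_eq_one fun i _ => ?_
    rw [Finsupp.single_apply, if_neg (by simp), pow_zero]
  rw [h1, h2, dZ_single_inl, pow_zero]
  ring

lemma EV_monomial_inr (t : ℝ) (y ξ : Fin n → ℝ) (k : Fin n) :
    EV t y ξ (MvPolynomial.monomial (Finsupp.single (Sum.inr k) 1) (1:ℝ)) = t * ξ k := by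
  rw [EV_monomial]
  have h1 : (∏ i, y i ^ ((Finsupp.single (Sum.inr k) (1:ℕ) :
      (Fin n ⊕ Fin n) →₀ ℕ)) (Sum.inl i)) = 1 := by
    refine Finset.prod_eq_one fun i _ => ?_
    rw [Finsupp.single_apply, if_neg (by simp), pow_zero]
  have h2 : (∏ i, ξ i ^ ((Finsupp.single (Sum.inr k) (1:ℕ) :
      (Fin n ⊕ Fin n) →₀ ℕ)) (Sum.inr i)) = ξ k := by
    rw [Finset.prod_eq_single k]
    · simp
    · intro b _ hb
      rw [Finsupp.single_apply, if_neg (by simp [Ne.symm hb]), pow_zero]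
    · intro h; exact absurd (Finset.mem_univ k) h
  rw [h1, h2, dZ_single_inr, pow_one]
  ring

/-- pairing of two multi-indices into a finitely supported exponent vector. -/
noncomputable def pairD {n : ℕ} (α β : Fin n → ℕ) : (Fin n ⊕ Fin n) →₀ ℕ :=
  Finsupp.equivFunOnFinite.symm (Sum.elim α β)

@[simp] lemma pairD_apply_inl (α β : Fin n → ℕ) (i : Fin n) :
    pairD α β (Sum.inl i) = α i := rfl

@[simp] lemma pairD_apply_inr (α β : Fin n → ℕ) (i : Fin n) :
    pairD α β (Sum.inr i) = β i := rfl

lemma pairD_eq_self (d : (Fin n ⊕ Fin n) →₀ ℕ) :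
    pairD (fun i => d (Sum.inl i)) (fun i => d (Sum.inr i)) = d := by
  ext v
  cases v with
  | inl i => rfl
  | inr i => rfl

lemma WD_split (d : (Fin n ⊕ Fin n) →₀ ℕ) :
    WD w d = wlen w (fun i => d (Sum.inl i)) + wlen w (fun i => d (Sum.inr i)) := by
  unfold WD wlen
  rw [Fintype.sum_sum_type]
  rfl

lemma TD_split (d : (Fin n ⊕ Fin n) →₀ ℕ) :
    TD d = mlen (fun i => d (Sum.inl i)) + mlen (fun i => d (Sum.inr i)) := by
  unfold TD mlen
  rw [Fintype.sum_sum_type]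

lemma le_WD_inl (d : (Fin n ⊕ Fin n) →₀ ℕ) (i : Fin n) : w i * d (Sum.inl i) ≤ WD w d :=
  Finset.single_le_sum (f := fun v => Sum.elim w w v * d v)
    (fun _ _ => Nat.zero_le _) (Finset.mem_univ (Sum.inl i))

lemma le_WD_inr (d : (Fin n ⊕ Fin n) →₀ ℕ) (i : Fin n) : w i * d (Sum.inr i) ≤ WD w d :=
  Finset.single_le_sum (f := fun v => Sum.elim w w v * d v)
    (fun _ _ => Nat.zero_le _) (Finset.mem_univ (Sum.inr i))

lemma monom_tmul (β : Fin n → ℕ) (t : ℝ) (ξ : Fin n → ℝ) :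
    monom β (fun i => t * ξ i) = (∏ i, ξ i ^ β i) * t ^ mlen β := by
  unfold monom mlen
  rw [← Finset.prod_pow_eq_pow_sum, ← Finset.prod_mul_distrib]
  exact Finset.prod_congr rfl fun i _ => by rw [mul_pow]; ring

/-- the triangular recursion defining the polynomial flow. -/
noncomputable def solP (n : ℕ) (w : Fin n → ℕ) (a : Fin n → Fin n → (Fin n → ℕ) → ℝ) :
    ℕ → MvPolynomial (Fin n ⊕ Fin n) ℝ
  | k =>
    if hk : k < n then
      MvPolynomial.monomial (Finsupp.single (Sum.inl (⟨k, hk⟩ : Fin n)) 1) (1:ℝ)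
      + MvPolynomial.monomial (Finsupp.single (Sum.inr (⟨k, hk⟩ : Fin n)) 1) (1:ℝ)
      + ∑ j ∈ Finset.univ.filter (fun j => w j < w ⟨k, hk⟩),
          Jop j (∑ α ∈ (mIdx n ((w ⟨k, hk⟩ - w j)+1)).filter
              (fun α => wlen w α = w ⟨k, hk⟩ - w j),
            MvPolynomial.C (a j ⟨k, hk⟩ α) *
              ∏ i : Fin n, (if _h : (i : ℕ) < k then solP n w a i else 1) ^ α i)
    else 0
  termination_by k => k
  decreasing_by exact _h

/-- the substituted right-hand side polynomial. -/
noncomputable def SQ (n : ℕ) (w : Fin n → ℕ) (a : Fin n → Fin n → (Fin n → ℕ) → ℝ)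
    (k j : Fin n) : MvPolynomial (Fin n ⊕ Fin n) ℝ :=
  ∑ α ∈ (mIdx n ((w k - w j)+1)).filter (fun α => wlen w α = w k - w j),
    MvPolynomial.C (a j k α) *
      ∏ i : Fin n, (if _h : (i : ℕ) < (k:ℕ) then solP n w a i else 1) ^ α i

lemma solP_spec (n : ℕ) (w : Fin n → ℕ) (a : Fin n → Fin n → (Fin n → ℕ) → ℝ)
    (k : Fin n) : solP n w a (k : ℕ) =
      MvPolynomial.monomial (Finsupp.single (Sum.inl k) 1) (1:ℝ)
      + MvPolynomial.monomial (Finsupp.single (Sum.inr k) 1) (1:ℝ)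
      + ∑ j ∈ Finset.univ.filter (fun j => w j < w k), Jop j (SQ n w a k j) := by
  rw [solP, dif_pos k.isLt]
  rfl

end FlowAux

/-- The flow of a linear combination of homogeneous vector fields
of degree `-w_j` exists for all times, is unique, and is given by universal
polynomials. -/
theorem flow_polynomial
    {n : ℕ} (hn : 0 < n) {w : Fin n → ℕ} (hw : IsWeight w)
    {Y : Fin n → (Fin n → ℝ) → (Fin n → ℝ)}
    (hYs : ∀ j, ContDiff ℝ (⊤ : ℕ∞) (Y j))
    (hYh : ∀ j, VFHomog w (Y j) (-(w j : ℤ)))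
    (hY0 : ∀ j, Y j 0 = Pi.single j 1) :
    ∃ c : Fin n → (Fin n → ℕ) → (Fin n → ℕ) → ℝ,
      ∀ ξ y : Fin n → ℝ,
        ∃ sol : ℝ → Fin n → ℝ,
          (∀ t : ℝ, ∀ k : Fin n, sol t k =
            y k + t * ξ k +
              ∑ p ∈ ((mIdx n (w k + 1)) ×ˢ (mIdx n (w k + 1))).filter
                  (fun p => wlen w p.1 + wlen w p.2 = w k ∧
                    2 ≤ mlen p.1 + mlen p.2),
                c k p.1 p.2 * monom p.1 y * monom p.2 (fun i => t * ξ i)) ∧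
          sol 0 = y ∧
          (∀ t : ℝ, HasDerivAt sol (∑ j, ξ j • Y j (sol t)) t) ∧
          (∀ z : ℝ → Fin n → ℝ, z 0 = y →
            (∀ t : ℝ, HasDerivAt z (∑ j, ξ j • Y j (z t)) t) → z = sol) := by
  classical
  have hwpos : ∀ i, 0 < w i := hw.pos
  have hYjk : ∀ j k : Fin n, ContDiff ℝ (⊤ : ℕ∞) fun x => Y j x k := fun j k =>
    contDiff_pi.mp (hYs j) k
  have hscale : ∀ (j k : Fin n) (t : ℝ), t ≠ 0 → ∀ x : Fin n → ℝ,
      t ^ w j * Y j (dil w t x) k = t ^ w k * Y j x k := by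
    intro j k t ht x
    have h := hYh j t ht x k
    have h2 := congrArg (fun r => t ^ ((w k : ℤ) + (w j : ℤ)) * r) h
    rw [← mul_assoc, ← mul_assoc, ← zpow_add₀ ht, ← zpow_add₀ ht,
      show (w k : ℤ) + (w j : ℤ) + -(w k : ℤ) = (w j : ℤ) by ring,
      show (w k : ℤ) + (w j : ℤ) + -(w j : ℤ) = (w k : ℤ) by ring,
      zpow_natCast, zpow_natCast] at h2
    exact h2
  have hYgt : ∀ j k : Fin n, w k < w j → ∀ x, Y j x k = 0 := by
    intro j k hkj x
    refine vanish_of_neg_homog hwpos (hYjk j k).continuous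
      (p := w j - w k) (by omega) x fun t ht => ?_
    have h := hscale j k t ht x
    have h2 : t ^ w k * (t ^ (w j - w k) * Y j (dil w t x) k) = t ^ w k * Y j x k := by
      rw [← mul_assoc, ← pow_add, show w k + (w j - w k) = w j by omega]
      exact h
    exact (mul_left_cancel₀ (pow_ne_zero _ ht) h2).symm
  have hYeq : ∀ j k : Fin n, w j = w k → ∀ x, Y j x k = (Pi.single j 1 : Fin n → ℝ) k := by
    intro j k hjk x
    have h : ∀ t : ℝ, t ≠ 0 → (fun z => Y j z k) (dil w t x) = (fun z => Y j z k) x := by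
      intro t ht
      have h2 := hscale j k t ht x
      rw [hjk] at h2
      exact mul_left_cancel₀ (pow_ne_zero _ ht) h2
    have h3 := const_of_homog_zero hwpos (hYjk j k).continuous x h
    rw [h3]
    have hd0 : dil w (2:ℝ) (0 : Fin n → ℝ) = 0 := by funext i; simp [dil]
    rw [hY0 j]
  have hYlt : ∀ j k : Fin n, w j < w k → ∀ t : ℝ, t ≠ 0 → ∀ x,
      (fun z => Y j z k) (dil w t x) = t ^ (w k - w j) * (fun z => Y j z k) x := by
    intro j k hjk t ht x
    have h := hscale j k t ht x
    have h2 : t ^ w j * Y j (dil w t x) k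
        = t ^ w j * (t ^ (w k - w j) * Y j x k) := by
      rw [← mul_assoc, ← pow_add, show w j + (w k - w j) = w k by omega]
      exact h
    exact mul_left_cancel₀ (pow_ne_zero _ ht) h2
  have hA : ∀ j k : Fin n, ∃ aa : (Fin n → ℕ) → ℝ, w j < w k → ∀ x, Y j x k =
      ∑ α ∈ (mIdx n ((w k - w j)+1)).filter (fun α => wlen w α = w k - w j),
        aa α * monom α x := by
    intro j k
    by_cases h : w j < w k
    · obtain ⟨aa, haa⟩ := homog_poly hwpos (w k - w j) (fun x => Y j x k)
        (hYjk j k) (hYlt j k h)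
      exact ⟨aa, fun _ => haa⟩
    · exact ⟨0, fun hc => absurd hc h⟩
  choose a ha using hA
  have hik_of : ∀ (k j : Fin n), w j < w k → ∀ (α : Fin n → ℕ), wlen w α = w k - w j →
      ∀ i : Fin n, α i ≠ 0 → (i : ℕ) < (k : ℕ) := by
    intro k j hjk α hα i hi
    have h1 : w i ≤ wlen w α := wi_le_wlen hwpos hi
    by_contra hcon
    have h2 : w k ≤ w i := hw.mono (by rw [Fin.le_def]; omega)
    have h3 := hwpos j
    omega
  -- homogeneity of the SQ-polynomials, given homogeneity of the lower solP's
  have hSQgen : ∀ (k j : Fin n), w j < w k →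
      (∀ i : Fin n, (i:ℕ) < (k:ℕ) → Hom w (w i) (solP n w a (i:ℕ))) →
      Hom w (w k - w j) (SQ n w a k j) := by
    intro k j hj hlow
    refine Hom_sum fun α hα => ?_
    simp only [Finset.mem_filter] at hα
    have hprod : Hom w (∑ i, w i * α i)
        (∏ i : Fin n, (if _h : (i:ℕ) < (k:ℕ) then solP n w a (i:ℕ) else 1) ^ α i) := by
      refine Hom_prod fun i _ => ?_
      by_cases hik : (i:ℕ) < (k:ℕ)
      · rw [dif_pos hik]
        exact Hom_pow (hlow i hik) (α i)
      · have hαi : α i = 0 := by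
          by_contra hne
          exact hik (hik_of k j hj α hα.2 i hne)
        rw [dif_neg hik, hαi, pow_zero, Nat.mul_zero]
        have h1 := Hom_C (w := w) (1:ℝ)
        rwa [map_one] at h1
    have h2 := Hom_mul (Hom_C (w := w) (a j k α)) hprod
    rw [zero_add] at h2
    have h3 : (∑ i, w i * α i) = w k - w j := hα.2
    rwa [h3] at h2
  have hHom : ∀ m : ℕ, ∀ k : Fin n, (k : ℕ) = m → Hom w (w k) (solP n w a m) := by
    intro m
    induction m using Nat.strong_induction_on with
    | _ m IH =>
    intro k hk
    subst hk
    rw [solP_spec]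
    refine Hom_add (Hom_add ?_ ?_) ?_
    · have h := Hom_monomial (w := w) (Finsupp.single (Sum.inl k) 1) (1:ℝ)
      rwa [WD_single_inl] at h
    · have h := Hom_monomial (w := w) (Finsupp.single (Sum.inr k) 1) (1:ℝ)
      rwa [WD_single_inr] at h
    · refine Hom_sum fun j hj => ?_
      simp only [Finset.mem_filter, Finset.mem_univ, true_and] at hj
      have hSQ := hSQgen k j hj (fun i hik => IH (i:ℕ) hik i rfl)
      have h4 := Hom_Jop hSQ j
      rwa [show w k - w j + w j = w k by omega] at h4
  have hHomK : ∀ k : Fin n, Hom w (w k) (solP n w a (k:ℕ)) := fun k => hHom (k:ℕ) k rfl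
  have hHomSQK : ∀ k j : Fin n, w j < w k → Hom w (w k - w j) (SQ n w a k j) :=
    fun k j hj => hSQgen k j hj (fun i _ => hHomK i)
  have hCC : ∀ k : Fin n, MvPolynomial.constantCoeff (solP n w a (k:ℕ)) = 0 := by
    intro k
    rw [MvPolynomial.constantCoeff_eq]
    exact Hom_coeff_zero (hwpos k) (hHomK k)
  have hCCSQ : ∀ k j : Fin n, w j < w k →
      MvPolynomial.constantCoeff (SQ n w a k j) = 0 := by
    intro k j hjk
    unfold SQ
    rw [map_sum]
    refine Finset.sum_eq_zero fun α hα => ?_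
    simp only [Finset.mem_filter] at hα
    rw [map_mul, MvPolynomial.constantCoeff_C, map_prod]
    have hα0 : ∃ i, α i ≠ 0 := by
      by_contra hno
      push_neg at hno
      have h1 : wlen w α = 0 := by
        unfold wlen
        exact Finset.sum_eq_zero fun i _ => by rw [hno i, Nat.mul_zero]
      have h2 := hα.2
      omega
    obtain ⟨i, hi⟩ := hα0
    have hik : (i:ℕ) < (k:ℕ) := hik_of k j hjk α hα.2 i hi
    rw [Finset.prod_eq_zero (Finset.mem_univ i)]
    · exact mul_zero _
    · rw [dif_pos hik, map_pow, hCC i, zero_pow hi]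
  have hHomR : ∀ k : Fin n, Hom w (w k)
      (∑ j ∈ Finset.univ.filter (fun j => w j < w k), Jop j (SQ n w a k j)) := by
    intro k
    refine Hom_sum fun j hj => ?_
    simp only [Finset.mem_filter, Finset.mem_univ, true_and] at hj
    have h4 := Hom_Jop (hHomSQK k j hj) j
    rwa [show w k - w j + w j = w k by omega] at h4
  have hDeg2R : ∀ k : Fin n, Deg2
      (∑ j ∈ Finset.univ.filter (fun j => w j < w k), Jop j (SQ n w a k j)) := by
    intro k
    refine Deg2_sum fun j hj => ?_
    simp only [Finset.mem_filter, Finset.mem_univ, true_and] at hj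
    exact Deg2_Jop (hCCSQ k j hj) j
  refine ⟨fun k α β => MvPolynomial.coeff (pairD α β)
    (∑ j ∈ Finset.univ.filter (fun j => w j < w k), Jop j (SQ n w a k j)), ?_⟩
  intro ξ y
  -- shared facts
  have hsplit : ∀ (t : ℝ) (k : Fin n),
      EV t y ξ (solP n w a (k:ℕ)) = y k + t * ξ k +
        EV t y ξ (∑ j ∈ Finset.univ.filter (fun j => w j < w k),
          Jop j (SQ n w a k j)) := by
    intro t k
    rw [show EV t y ξ (solP n w a (k:ℕ))
        = EV t y ξ (MvPolynomial.monomial (Finsupp.single (Sum.inl k) 1) (1:ℝ))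
          + EV t y ξ (MvPolynomial.monomial (Finsupp.single (Sum.inr k) 1) (1:ℝ))
          + EV t y ξ (∑ j ∈ Finset.univ.filter (fun j => w j < w k),
              Jop j (SQ n w a k j)) from by
      unfold EV; rw [solP_spec, map_add, map_add]]
    rw [EV_monomial_inl, EV_monomial_inr]
  have hEVSQ : ∀ (k j : Fin n), w j < w k → ∀ t : ℝ,
      EV t y ξ (SQ n w a k j)
        = Y j (fun k' => EV t y ξ (solP n w a ((k':Fin n):ℕ))) k := by
    intro k j hjk t
    rw [ha j k hjk (fun k' => EV t y ξ (solP n w a ((k':Fin n):ℕ)))]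
    unfold SQ EV
    rw [map_sum]
    refine Finset.sum_congr rfl fun α hα => ?_
    simp only [Finset.mem_filter] at hα
    rw [map_mul, MvPolynomial.eval_C, map_prod]
    congr 1
    unfold monom
    refine Finset.prod_congr rfl fun i _ => ?_
    rw [map_pow]
    by_cases hαi : α i = 0
    · rw [hαi, pow_zero, pow_zero]
    · rw [dif_pos (hik_of k j hjk α hα.2 i hαi)]
  have hsum : ∀ (u : Fin n → ℝ) (k : Fin n), (∑ j, ξ j • Y j u) k
      = ξ k + ∑ j ∈ Finset.univ.filter (fun j => w j < w k), ξ j * Y j u k := by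
    intro u k
    rw [Finset.sum_apply]
    simp only [Pi.smul_apply, smul_eq_mul]
    rw [← Finset.sum_filter_add_sum_filter_not Finset.univ (fun j => w j < w k)
      (fun j => ξ j * Y j u k), add_comm]
    congr 1
    rw [Finset.sum_eq_single k]
    · rw [hYeq k k rfl u, Pi.single_eq_same, mul_one]
    · intro j hj hjne
      simp only [Finset.mem_filter, Finset.mem_univ, true_and, not_lt] at hj
      rcases Nat.lt_or_ge (w k) (w j) with h | h
      · rw [hYgt j k h u, mul_zero]
      · have hje : w j = w k := le_antisymm h hj
        rw [hYeq j k hje u, Pi.single_eq_of_ne (Ne.symm hjne), mul_zero]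
    · intro hk
      exact absurd (Finset.mem_filter.mpr ⟨Finset.mem_univ k, by simp⟩) hk
  have hODEaux : ∀ (t : ℝ) (k : Fin n),
      HasDerivAt (fun s => EV s y ξ (solP n w a (k:ℕ)))
        (ξ k + ∑ j ∈ Finset.univ.filter (fun j => w j < w k),
          ξ j * Y j (fun k' => EV t y ξ (solP n w a ((k':Fin n):ℕ))) k) t := by
    intro t k
    have hfk : (fun s => EV s y ξ (solP n w a (k:ℕ))) = fun s =>
        EV s y ξ (MvPolynomial.monomial (Finsupp.single (Sum.inl k) 1) (1:ℝ))
        + EV s y ξ (MvPolynomial.monomial (Finsupp.single (Sum.inr k) 1) (1:ℝ))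
        + ∑ j ∈ Finset.univ.filter (fun j => w j < w k),
            EV s y ξ (Jop j (SQ n w a k j)) := by
      funext s
      unfold EV
      rw [solP_spec, map_add, map_add, map_sum]
    rw [hfk]
    have h1 : HasDerivAt (fun s : ℝ =>
        EV s y ξ (MvPolynomial.monomial (Finsupp.single (Sum.inl k) 1) (1:ℝ))) 0 t := by
      rw [funext (fun s => EV_monomial_inl s y ξ k)]
      exact hasDerivAt_const t (y k)
    have h2 : HasDerivAt (fun s : ℝ =>
        EV s y ξ (MvPolynomial.monomial (Finsupp.single (Sum.inr k) 1) (1:ℝ))) (ξ k) t := by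
      rw [funext (fun s => EV_monomial_inr s y ξ k)]
      simpa using (hasDerivAt_id t).mul_const (ξ k)
    have h3 : HasDerivAt (fun s => ∑ j ∈ Finset.univ.filter (fun j => w j < w k),
        EV s y ξ (Jop j (SQ n w a k j)))
        (∑ j ∈ Finset.univ.filter (fun j => w j < w k),
          ξ j * Y j (fun k' => EV t y ξ (solP n w a ((k':Fin n):ℕ))) k) t := by
      refine HasDerivAt.fun_sum fun j hj => ?_
      simp only [Finset.mem_filter, Finset.mem_univ, true_and] at hj
      have h4 := hasDerivAt_EV_Jop y ξ j (SQ n w a k j) t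
      rwa [hEVSQ k j hj t] at h4
    have h5 := (h1.add h2).add h3
    simpa [Pi.add_def] using h5
  have hsol0 : ∀ k : Fin n, EV 0 y ξ (solP n w a (k:ℕ)) = y k := by
    intro k
    rw [hsplit 0 k]
    have hz : EV 0 y ξ (∑ j ∈ Finset.univ.filter (fun j => w j < w k),
        Jop j (SQ n w a k j)) = 0 := by
      unfold EV
      rw [map_sum]
      exact Finset.sum_eq_zero fun j _ => EV_zero_Jop y ξ j _
    rw [hz]
    ring
  refine ⟨fun t k => EV t y ξ (solP n w a (k:ℕ)), ?_, ?_, ?_, ?_⟩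
  · -- explicit polynomial formula
    intro t k
    beta_reduce
    rw [hsplit t k]
    congr 1
    rw [EV_eq]
    have himg : (∑ j ∈ Finset.univ.filter (fun j => w j < w k),
        Jop j (SQ n w a k j)).support ⊆
        (((mIdx n (w k + 1)) ×ˢ (mIdx n (w k + 1))).filter
          (fun p => wlen w p.1 + wlen w p.2 = w k ∧ 2 ≤ mlen p.1 + mlen p.2)).image
          (fun p => pairD p.1 p.2) := by
      intro d hd
      refine Finset.mem_image.mpr
        ⟨(fun i => d (Sum.inl i), fun i => d (Sum.inr i)), ?_, pairD_eq_self d⟩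
      have hWD := hHomR k d hd
      have hTD := hDeg2R k d hd
      rw [Finset.mem_filter, Finset.mem_product]
      refine ⟨⟨?_, ?_⟩, ?_, ?_⟩
      · rw [mem_mIdx]
        intro i
        have h1 := le_WD_inl (w := w) d i
        have h2 : d (Sum.inl i) ≤ w i * d (Sum.inl i) := Nat.le_mul_of_pos_left _ (hwpos i)
        show d (Sum.inl i) < w k + 1
        omega
      · rw [mem_mIdx]
        intro i
        have h1 := le_WD_inr (w := w) d i
        have h2 : d (Sum.inr i) ≤ w i * d (Sum.inr i) := Nat.le_mul_of_pos_left _ (hwpos i)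
        show d (Sum.inr i) < w k + 1
        omega
      · rw [← WD_split]
        exact hWD
      · rw [← TD_split]
        exact hTD
    rw [(Finset.sum_subset himg (fun d _ hd => by
      rw [MvPolynomial.notMem_support_iff.mp hd, zero_mul]))]
    rw [Finset.sum_image (fun p _ q _ hpq => by
      have h1 : p.1 = q.1 := funext fun i => by
        have := DFunLike.congr_fun hpq (Sum.inl i)
        simpa using this
      have h2 : p.2 = q.2 := funext fun i => by
        have := DFunLike.congr_fun hpq (Sum.inr i)
        simpa using this
      exact Prod.ext h1 h2)]
    refine Finset.sum_congr rfl fun p _ => ?_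
    rw [monom_tmul]
    have hdz : dZ (pairD p.1 p.2) = mlen p.2 := by
      unfold dZ mlen
      exact Finset.sum_congr rfl fun i _ => rfl
    have hy : (∏ i, y i ^ (pairD p.1 p.2) (Sum.inl i)) = monom p.1 y := rfl
    have hx : (∏ i, ξ i ^ (pairD p.1 p.2) (Sum.inr i)) = ∏ i, ξ i ^ p.2 i := rfl
    rw [hdz, hy, hx]
    unfold monom
    ring
  · -- initial condition
    funext k
    exact hsol0 k
  · -- the ODE
    intro t
    rw [hasDerivAt_pi]
    intro k
    beta_reduce
    have h := hODEaux t k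
    have hs := hsum (fun k' => EV t y ξ (solP n w a ((k':Fin n):ℕ))) k
    rw [show ((∑ j, ξ j • Y j (fun k' => EV t y ξ (solP n w a ((k':Fin n):ℕ)))) k)
      = ξ k + ∑ j ∈ Finset.univ.filter (fun j => w j < w k),
          ξ j * Y j (fun k' => EV t y ξ (solP n w a ((k':Fin n):ℕ))) k from hs]
    exact h
  · -- uniqueness
    intro z hz0 hz'
    have huniq : ∀ m : ℕ, ∀ k : Fin n, (k:ℕ) = m → ∀ t : ℝ,
        z t k = EV t y ξ (solP n w a (k:ℕ)) := by
      intro m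
      induction m using Nat.strong_induction_on with
      | _ m IH =>
      intro k hk t
      subst hk
      have hYagree : ∀ s : ℝ, ∀ j ∈ Finset.univ.filter (fun j => w j < w k),
          ξ j * Y j (z s) k
          = ξ j * Y j (fun k' => EV s y ξ (solP n w a ((k':Fin n):ℕ))) k := by
        intro s j hj
        simp only [Finset.mem_filter, Finset.mem_univ, true_and] at hj
        rw [ha j k hj (z s), ha j k hj (fun k' => EV s y ξ (solP n w a ((k':Fin n):ℕ)))]
        congr 1
        refine Finset.sum_congr rfl fun α hα => ?_
        simp only [Finset.mem_filter] at hα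
        congr 1
        unfold monom
        refine Finset.prod_congr rfl fun i _ => ?_
        by_cases hαi : α i = 0
        · rw [hαi, pow_zero, pow_zero]
        · have hik := hik_of k j hj α hα.2 i hαi
          rw [IH (i:ℕ) hik i rfl s]
      have hzk : ∀ s : ℝ, HasDerivAt (fun r => z r k)
          (ξ k + ∑ j ∈ Finset.univ.filter (fun j => w j < w k),
            ξ j * Y j (fun k' => EV s y ξ (solP n w a ((k':Fin n):ℕ))) k) s := by
        intro s
        have h := hasDerivAt_pi.mp (hz' s) k
        rw [hsum (z s) k] at h
        rwa [Finset.sum_congr rfl (hYagree s)] at h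
      have hdiff : ∀ s : ℝ, HasDerivAt
          (fun r => z r k - EV r y ξ (solP n w a (k:ℕ))) 0 s := by
        intro s
        simpa [Pi.sub_def] using (hzk s).sub (hODEaux s k)
      have hconst := is_const_of_deriv_eq_zero
        (fun s => (hdiff s).differentiableAt) (fun s => (hdiff s).deriv) t 0
      have hinit : z 0 k - EV 0 y ξ (solP n w a (k:ℕ)) = 0 := by
        rw [hz0, hsol0 k]
        ring
      have h6 : z t k - EV t y ξ (solP n w a (k:ℕ)) = 0 := hconst.trans hinit
      linarith
    funext t k
    exact huniq (k:ℕ) k rfl t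


end Carnot
end
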